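/- arXiv:1001.0895 — 7 statements merged into one kernel-verified Lean document; each statement's English description precedes it below -/
import Mathlib

section
/- If (z(t))_{t≥0} and (w(t))_{t≥0} are both solutions of ż = v(z) in D and z_k(0) ≤ w_k(0) for all k ≥ 1, then z_k(t) ≤ w_k(t) for all k ≥ 1 and all t ≥ 0. -/
open Filter

noncomputable section

/-- `pcoef n z j` is `p_j(z) = n (z_j - z_{j+1}) z_{j+1}^(n-1)`. -/
def pcoef (n : ℕ) (z : ℕ → ℝ) (j : ℕ) : ℝ :=
  (n : ℝ) * (z j - z (j + 1)) * z (j + 1) ^ (n - 1)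

/-- The `j`-th factor `z_{j+1}^n / (1 - p_j(z))` of `μ(z,·)`,
with the convention that a factor of the form `0/0` equals `1`. -/
def muFactor (n : ℕ) (z : ℕ → ℝ) (j : ℕ) : ℝ :=
  if z (j + 1) ^ n = 0 ∧ 1 - pcoef n z j = 0 then 1
  else z (j + 1) ^ n / (1 - pcoef n z j)

/-- `mu n z k` is `μ(z,k) = ∏_{j=1}^k z_j^n / (1 - p_{j-1}(z))`. -/
def mu (n : ℕ) (z : ℕ → ℝ) (k : ℕ) : ℝ :=
  ∏ j ∈ Finset.range k, muFactor n z j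

/-- The vector field `v_k(z) = λ z_{k-1}^n μ(z,k-1) - λ z_k^n μ(z,k) - (z_k - z_{k+1})`,
meaningful for `k ≥ 1`. -/
def vfield (lam : ℝ) (n : ℕ) (z : ℕ → ℝ) (k : ℕ) : ℝ :=
  lam * z (k - 1) ^ n * mu n z (k - 1) - lam * z k ^ n * mu n z k - (z k - z (k + 1))

/-- Membership in `D`: non-increasing `[0,1]`-valued summable sequences,
with the convention `z 0 = 1`. -/
def memD (z : ℕ → ℝ) : Prop :=
  z 0 = 1 ∧ (∀ k, z (k + 1) ≤ z k) ∧ (∀ k, 0 ≤ z k ∧ z k ≤ 1) ∧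
    Summable (fun k => z (k + 1))

/-- A solution of `ż = v(z)` in `D`: a family of functions `z k : [0,∞) → [0,1]`,
lying in `D` at each time `t ≥ 0`, differentiable with derivative `v_k(z(t))` for `k ≥ 1`. -/
def IsSolution (lam : ℝ) (n : ℕ) (z : ℕ → ℝ → ℝ) : Prop :=
  (∀ t : ℝ, 0 ≤ t → memD (fun k => z k t)) ∧
  (∀ k : ℕ, 1 ≤ k → ∀ t : ℝ, 0 ≤ t →
    HasDerivWithinAt (z k) (vfield lam n (fun j => z j t) k) (Set.Ici 0) t)

/-- Membership in `D(d)`: `0 ≤ x_d ≤ ⋯ ≤ x_1 ≤ 1` and `x_k = 0` for `k > d`,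
with the convention `x 0 = 1`. -/
def memDd (d : ℕ) (x : ℕ → ℝ) : Prop :=
  x 0 = 1 ∧ (∀ k, x (k + 1) ≤ x k) ∧ (∀ k, 0 ≤ x k ∧ x k ≤ 1) ∧
    (∀ k, d < k → x k = 0)

/-- The truncated vector field `u = u^(d)`. -/
def ufield (lam : ℝ) (n : ℕ) (d : ℕ) (x : ℕ → ℝ) (k : ℕ) : ℝ :=
  if k < d then vfield lam n x k
  else if k = d then
    lam * x (d - 1) ^ n * mu n x (d - 1) - lam * x d ^ n * mu n x d - x d
  else 0

/-- A solution of the truncated system `ẋ = u^(d)(x)` in `D(d)`. -/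
def IsSolutionTrunc (lam : ℝ) (n : ℕ) (d : ℕ) (x : ℕ → ℝ → ℝ) : Prop :=
  (∀ t : ℝ, 0 ≤ t → memDd d (fun k => x k t)) ∧
  (∀ k : ℕ, 1 ≤ k → ∀ t : ℝ, 0 ≤ t →
    HasDerivWithinAt (x k) (ufield lam n d (fun j => x j t) k) (Set.Ici 0) t)


namespace Stmt1Aux

/-- denominator `1 - p` as a two-variable function. -/
def Dden (n : ℕ) (s t : ℝ) : ℝ := 1 - (n : ℝ) * (s - t) * t ^ (n - 1)

/-- the `mu` factor as a two-variable function. -/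
def Ff (n : ℕ) (s t : ℝ) : ℝ :=
  if t ^ n = 0 ∧ Dden n s t = 0 then 1 else t ^ n / Dden n s t

def Gp (n : ℕ) (s t : ℝ) : ℝ := s ^ n - t ^ n * Ff n s t

/-- admissible pair -/
def Pp (s t : ℝ) : Prop := 0 ≤ t ∧ t ≤ s ∧ s ≤ 1

def Cone (x : ℕ → ℝ) : Prop :=
  x 0 = 1 ∧ (∀ k, x (k + 1) ≤ x k) ∧ (∀ k, 0 ≤ x k ∧ x k ≤ 1)

def aseq (n : ℕ) (x : ℕ → ℝ) (k : ℕ) : ℝ := x k ^ n * mu n x k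

theorem muFactor_eq (n : ℕ) (z : ℕ → ℝ) (j : ℕ) :
    muFactor n z j = Ff n (z j) (z (j + 1)) := rfl

theorem Cone.pair {x : ℕ → ℝ} (hx : Cone x) (j : ℕ) : Pp (x j) (x (j + 1)) :=
  ⟨(hx.2.2 (j+1)).1, hx.2.1 j, (hx.2.2 j).2⟩

/- ### one-variable power inequalities -/

theorem pow_sub_pow_le {a b : ℝ} (m : ℕ) (ha : 0 ≤ a) (hab : a ≤ b) (hb : b ≤ 1) :
    b ^ m - a ^ m ≤ (m : ℝ) * (b - a) := by
  rw [← geom_sum₂_mul b a m]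
  have hsum : (∑ i ∈ Finset.range m, b ^ i * a ^ (m - 1 - i)) ≤ (m : ℝ) := by
    calc (∑ i ∈ Finset.range m, b ^ i * a ^ (m - 1 - i))
        ≤ ∑ _i ∈ Finset.range m, (1 : ℝ) := by
          refine Finset.sum_le_sum fun i _ => ?_
          have h1 : b ^ i ≤ 1 := pow_le_one₀ (le_trans ha hab) hb
          have h2 : a ^ (m - 1 - i) ≤ 1 := pow_le_one₀ ha (le_trans hab hb)
          calc b ^ i * a ^ (m - 1 - i) ≤ 1 * 1 :=
                mul_le_mul h1 h2 (pow_nonneg ha _) zero_le_one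
            _ = 1 := by ring
      _ = (m : ℝ) := by simp
  exact mul_le_mul_of_nonneg_right hsum (by linarith)

theorem le_pow_sub_pow {a b : ℝ} (m : ℕ) (ha : 0 ≤ a) (hab : a ≤ b) :
    (m : ℝ) * a ^ (m - 1) * (b - a) ≤ b ^ m - a ^ m := by
  rw [← geom_sum₂_mul b a m]
  have hsum : (m : ℝ) * a ^ (m - 1) ≤ ∑ i ∈ Finset.range m, b ^ i * a ^ (m - 1 - i) := by
    have : (m : ℝ) * a ^ (m - 1) = ∑ _i ∈ Finset.range m, a ^ (m - 1) := by
      simp [mul_comm]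
    rw [this]
    refine Finset.sum_le_sum fun i hi => ?_
    have hi' : i < m := Finset.mem_range.1 hi
    have heq : a ^ (m - 1) = a ^ i * a ^ (m - 1 - i) := by
      rw [← pow_add]; congr 1; omega
    rw [heq]
    exact mul_le_mul_of_nonneg_right (pow_le_pow_left₀ ha hab i) (pow_nonneg ha _)
  exact mul_le_mul_of_nonneg_right hsum (by linarith)

theorem le_pow_sub_pow' {a b : ℝ} (m : ℕ) (ha : 0 ≤ a) (hab : a ≤ b) (hb : b ≤ 1) :
    (m : ℝ) * (a ^ (m - 1) * b ^ (m - 1)) * (b - a) ≤ b ^ m - a ^ m := by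
  rw [← geom_sum₂_mul b a m]
  have hsum : (m : ℝ) * (a ^ (m - 1) * b ^ (m - 1))
      ≤ ∑ i ∈ Finset.range m, b ^ i * a ^ (m - 1 - i) := by
    have : (m : ℝ) * (a ^ (m - 1) * b ^ (m - 1))
        = ∑ _i ∈ Finset.range m, a ^ (m - 1) * b ^ (m - 1) := by
      simp [mul_comm]
    rw [this]
    refine Finset.sum_le_sum fun i hi => ?_
    have hi' : i < m := Finset.mem_range.1 hi
    have h1 : b ^ (m - 1) ≤ b ^ i :=
      pow_le_pow_of_le_one (le_trans ha hab) hb (by omega)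
    have h2 : a ^ (m - 1) ≤ a ^ (m - 1 - i) :=
      pow_le_pow_of_le_one ha (le_trans hab hb) (by omega)
    calc a ^ (m - 1) * b ^ (m - 1) ≤ a ^ (m - 1 - i) * b ^ i :=
          mul_le_mul h2 h1 (pow_nonneg (le_trans ha hab) _) (pow_nonneg ha _)
      _ = b ^ i * a ^ (m - 1 - i) := mul_comm _ _
  exact mul_le_mul_of_nonneg_right hsum (by linarith)

/- ### properties of Dden -/

theorem Dden_ge {n : ℕ} {s t : ℝ} (h : Pp s t) : t ^ n ≤ Dden n s t := by
  obtain ⟨ht0, hts, hs1⟩ := h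
  have key : (n : ℝ) * t ^ (n - 1) * (1 - t) ≤ 1 ^ n - t ^ n :=
    le_pow_sub_pow n ht0 (le_trans hts hs1)
  have h2 : (n : ℝ) * (s - t) * t ^ (n - 1) ≤ (n : ℝ) * t ^ (n - 1) * (1 - t) := by
    have : (n : ℝ) * (s - t) * t ^ (n - 1) = ((n : ℝ) * t ^ (n - 1)) * (s - t) := by ring
    rw [this]
    have hnn : 0 ≤ (n : ℝ) * t ^ (n - 1) :=
      mul_nonneg (Nat.cast_nonneg n) (pow_nonneg ht0 _)
    have := mul_le_mul_of_nonneg_left (by linarith : s - t ≤ 1 - t) hnn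
    linarith [this]
  simp only [Dden]
  simp only [one_pow] at key
  linarith

theorem Dden_le_one {n : ℕ} {s t : ℝ} (h : Pp s t) : Dden n s t ≤ 1 := by
  obtain ⟨ht0, hts, hs1⟩ := h
  have : 0 ≤ (n : ℝ) * (s - t) * t ^ (n - 1) :=
    mul_nonneg (mul_nonneg (Nat.cast_nonneg n) (by linarith)) (pow_nonneg ht0 _)
  simp only [Dden]; linarith

theorem Dden_nonneg {n : ℕ} {s t : ℝ} (h : Pp s t) : 0 ≤ Dden n s t :=
  le_trans (pow_nonneg h.1 n) (Dden_ge h)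

theorem Dden_eq_zero {n : ℕ} {s t : ℝ} (hn : 1 ≤ n) (h : Pp s t) (h0 : Dden n s t = 0) :
    t = 0 ∧ n = 1 ∧ s = 1 := by
  have ht : t = 0 := by
    have h1 : t ^ n ≤ 0 := h0 ▸ Dden_ge h
    have h2 : 0 ≤ t ^ n := pow_nonneg h.1 n
    have : t ^ n = 0 := le_antisymm h1 h2
    exact pow_eq_zero_iff (by omega) |>.1 this
  subst ht
  have hn1 : n = 1 := by
    by_contra hne
    have h2 : 2 ≤ n := by omega
    have : (0 : ℝ) ^ (n - 1) = 0 := zero_pow (by omega)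
    simp only [Dden, this, mul_zero, sub_zero] at h0
    exact one_ne_zero h0
  subst hn1
  refine ⟨rfl, rfl, ?_⟩
  simp only [Dden] at h0
  norm_num at h0
  linarith

/- ### properties of Ff -/

theorem Ff_nonneg {n : ℕ} {s t : ℝ} (h : Pp s t) : 0 ≤ Ff n s t := by
  unfold Ff
  split
  · exact zero_le_one
  · exact div_nonneg (pow_nonneg h.1 n) (Dden_nonneg h)

theorem Ff_le_one {n : ℕ} {s t : ℝ} (h : Pp s t) : Ff n s t ≤ 1 := by
  unfold Ff
  split
  · exact le_refl 1
  · rename_i hcond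
    rcases eq_or_lt_of_le (Dden_nonneg (n := n) h) with hD | hD
    · have ht : t ^ n = 0 := by
        have h1 : t ^ n ≤ 0 := by rw [hD]; exact Dden_ge h
        exact le_antisymm h1 (pow_nonneg h.1 n)
      exact absurd ⟨ht, hD.symm⟩ hcond
    · exact div_le_one_of_le₀ (Dden_ge h) (le_of_lt hD)

theorem abs_pow_sub_pow_le {a b : ℝ} (m : ℕ) (ha : 0 ≤ a) (ha1 : a ≤ 1)
    (hb : 0 ≤ b) (hb1 : b ≤ 1) : |a ^ m - b ^ m| ≤ (m : ℝ) * |a - b| := by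
  rcases le_total a b with hab | hab
  · rw [abs_sub_comm, abs_of_nonneg (by linarith [pow_le_pow_left₀ ha hab m] :
      (0:ℝ) ≤ b ^ m - a ^ m), abs_sub_comm, abs_of_nonneg (by linarith : (0:ℝ) ≤ b - a)]
    exact pow_sub_pow_le m ha hab hb1
  · rw [abs_of_nonneg (by linarith [pow_le_pow_left₀ hb hab m] :
      (0:ℝ) ≤ a ^ m - b ^ m), abs_of_nonneg (by linarith : (0:ℝ) ≤ a - b)]
    exact pow_sub_pow_le m hb hab ha1

theorem Ff_mono {n : ℕ} {s t s' t' : ℝ} (hn : 1 ≤ n) (h : Pp s t) (h' : Pp s' t')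
    (hs : s ≤ s') (ht : t ≤ t') : Ff n s t ≤ Ff n s' t' := by
  by_cases hD' : Dden n s' t' = 0
  · obtain ⟨ht'0, -, -⟩ := Dden_eq_zero hn h' hD'
    have hone : Ff n s' t' = 1 := by
      unfold Ff
      rw [if_pos ⟨by rw [ht'0]; exact zero_pow (by omega), hD'⟩]
    rw [hone]; exact Ff_le_one h
  · have hD'pos : 0 < Dden n s' t' := lt_of_le_of_ne (Dden_nonneg h') (Ne.symm hD')
    have hFf' : Ff n s' t' = t' ^ n / Dden n s' t' := by
      unfold Ff; rw [if_neg]; rintro ⟨-, hc⟩; exact hD' hc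
    by_cases hD : Dden n s t = 0
    · obtain ⟨ht0, hn1, hs1⟩ := Dden_eq_zero hn h hD
      subst hn1
      have hFf1 : Ff 1 s t = 1 := by
        unfold Ff; rw [if_pos ⟨by rw [ht0, pow_one], hD⟩]
      have hdd : Dden 1 s' t' = 1 - s' + t' := by
        unfold Dden; norm_num; ring
      have hs'1 : s' = 1 := le_antisymm h'.2.2 (by rw [← hs1]; exact hs)
      have hdd2 : Dden 1 s' t' = t' := by rw [hdd, hs'1]; ring
      have ht'ne : t' ≠ 0 := by
        intro hc; exact hD' (by rw [hdd2, hc])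
      rw [hFf1, hFf', hdd2, pow_one, div_self ht'ne]
    · have hDpos : 0 < Dden n s t := lt_of_le_of_ne (Dden_nonneg h) (Ne.symm hD)
      have hFf : Ff n s t = t ^ n / Dden n s t := by
        unfold Ff; rw [if_neg]; rintro ⟨-, hc⟩; exact hD hc
      rw [hFf, hFf', div_le_div_iff₀ hDpos hD'pos]
      have e1 : t ^ n = t ^ (n - 1) * t := by
        conv_lhs => rw [show n = (n - 1) + 1 by omega, pow_succ]
      have e1' : t' ^ n = t' ^ (n - 1) * t' := by
        conv_lhs => rw [show n = (n - 1) + 1 by omega, pow_succ]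
      have key : (n : ℝ) * (t ^ (n - 1) * t' ^ (n - 1)) * (t' - t) ≤ t' ^ n - t ^ n :=
        le_pow_sub_pow' n h.1 ht (le_trans h'.2.1 h'.2.2)
      have hAB : 0 ≤ (n : ℝ) * (t ^ (n - 1) * t' ^ (n - 1)) :=
        mul_nonneg (Nat.cast_nonneg n) (mul_nonneg (pow_nonneg h.1 _) (pow_nonneg h'.1 _))
      have hst' : s * t' - s' * t ≤ t' - t := by
        have h1 : s * t ≤ s' * t := mul_le_mul_of_nonneg_right hs h.1
        have h2 : s * t' - s * t ≤ t' - t := by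
          have : s * (t' - t) ≤ 1 * (t' - t) :=
            mul_le_mul_of_nonneg_right h.2.2 (by linarith)
          nlinarith
        linarith
      have h5 : (n : ℝ) * (t ^ (n - 1) * t' ^ (n - 1)) * (s * t' - s' * t)
          ≤ (n : ℝ) * (t ^ (n - 1) * t' ^ (n - 1)) * (t' - t) :=
        mul_le_mul_of_nonneg_left hst' hAB
      simp only [Dden]
      rw [e1, e1'] at key ⊢
      nlinarith [key, h5]

theorem Ff_lip {n : ℕ} {s t s' t' : ℝ} (hn : 1 ≤ n) (h : Pp s t) (h' : Pp s' t') :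
    t' ^ n * |Ff n s t - Ff n s' t'| ≤ (2 * n ^ 2 + 2 * n) * max (|s - s'|) (|t - t'|) := by
  have hmax0 : 0 ≤ max (|s - s'|) (|t - t'|) := le_trans (abs_nonneg _) (le_max_left _ _)
  have hconst : (1:ℝ) ≤ 2 * n ^ 2 + 2 * n := by
    have : (1:ℝ) ≤ (n:ℝ) := by exact_mod_cast hn
    nlinarith
  have hRHSnn : 0 ≤ (2 * (n:ℝ) ^ 2 + 2 * n) * max (|s - s'|) (|t - t'|) :=
    mul_nonneg (by linarith) hmax0
  by_cases ht' : t' ^ n = 0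
  · rw [ht', zero_mul]; exact hRHSnn
  · have ht'pos : 0 < t' ^ n := lt_of_le_of_ne (pow_nonneg h'.1 n) (Ne.symm ht')
    have hD'pos : 0 < Dden n s' t' := lt_of_lt_of_le ht'pos (Dden_ge h')
    have hFf' : Ff n s' t' = t' ^ n / Dden n s' t' := by
      unfold Ff; rw [if_neg]; rintro ⟨hc, -⟩; exact ht' hc
    by_cases hD : Dden n s t = 0
    · obtain ⟨ht0, hn1, hs1⟩ := Dden_eq_zero hn h hD
      subst hn1
      have hFf1 : Ff 1 s t = 1 := by
        unfold Ff; rw [if_pos ⟨by rw [ht0, pow_one], hD⟩]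
      have hdd : Dden 1 s' t' = 1 - s' + t' := by
        unfold Dden; norm_num; ring
      have hts' : t' ≤ Dden 1 s' t' := by rw [hdd]; linarith [h'.2.2]
      have habs : |Ff 1 s t - Ff 1 s' t'| = (1 - s') / Dden 1 s' t' := by
        rw [hFf1, hFf', pow_one]
        rw [abs_of_nonneg]
        · rw [eq_div_iff (ne_of_gt hD'pos), sub_mul, one_mul,
            div_mul_cancel₀ _ (ne_of_gt hD'pos), hdd]
          ring
        · rw [sub_nonneg]
          exact div_le_one_of_le₀ hts' (le_of_lt hD'pos)
      rw [habs, pow_one]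
      have hb : t' / Dden 1 s' t' ≤ 1 := div_le_one_of_le₀ hts' (le_of_lt hD'pos)
      have h1s' : 0 ≤ 1 - s' := by linarith [h'.2.2]
      have key : t' * ((1 - s') / Dden 1 s' t') ≤ 1 - s' := by
        have e : t' * ((1 - s') / Dden 1 s' t') = (t' / Dden 1 s' t') * (1 - s') := by ring
        rw [e]
        calc (t' / Dden 1 s' t') * (1 - s') ≤ 1 * (1 - s') :=
              mul_le_mul_of_nonneg_right hb h1s'
          _ = 1 - s' := one_mul _
      have key2 : 1 - s' ≤ max (|s - s'|) (|t - t'|) := by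
        refine le_trans ?_ (le_max_left _ _)
        rw [show s - s' = 1 - s' by rw [hs1]]
        exact le_abs_self _
      have : (1:ℝ) ≤ 2 * ((1:ℕ):ℝ) ^ 2 + 2 * ((1:ℕ):ℝ) := by norm_num
      nlinarith [key, key2, hmax0]
    · have hDpos : 0 < Dden n s t := lt_of_le_of_ne (Dden_nonneg h) (Ne.symm hD)
      have hFf : Ff n s t = t ^ n / Dden n s t := by
        unfold Ff; rw [if_neg]; rintro ⟨-, hc⟩; exact hD hc
      set D := Dden n s t with hDdef
      set D' := Dden n s' t' with hD'def
      have e : t' ^ n * (Ff n s t - Ff n s' t')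
          = (t ^ n / D) * (t' ^ n / D') * (D' - D) + (t' ^ n / D') * (t ^ n - t' ^ n) := by
        rw [hFf, hFf']; field_simp; ring
      have hb1 : t ^ n / D ≤ 1 := div_le_one_of_le₀ (Dden_ge h) (le_of_lt hDpos)
      have hb1' : 0 ≤ t ^ n / D := div_nonneg (pow_nonneg h.1 n) (le_of_lt hDpos)
      have hb2 : t' ^ n / D' ≤ 1 := div_le_one_of_le₀ (Dden_ge h') (le_of_lt hD'pos)
      have hb2' : 0 ≤ t' ^ n / D' := div_nonneg (pow_nonneg h'.1 n) (le_of_lt hD'pos)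
      -- bound |D' - D|
      have eDD : D' - D = (n : ℝ) * ((s - t) * (t ^ (n-1) - t' ^ (n-1)))
          + (n : ℝ) * t' ^ (n-1) * ((s - s') - (t - t')) := by
        simp only [hDdef, hD'def, Dden]; ring
      have hst1 : |s - t| ≤ 1 := by
        rw [abs_of_nonneg (by linarith [h.2.1] : (0:ℝ) ≤ s - t)]
        linarith [h.1, h.2.2]
      have ht'1 : |t' ^ (n-1)| ≤ 1 := by
        rw [abs_of_nonneg (pow_nonneg h'.1 _)]
        exact pow_le_one₀ h'.1 (le_trans h'.2.1 h'.2.2)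
      have hpowdiff : |t ^ (n-1) - t' ^ (n-1)| ≤ (n:ℝ) * |t - t'| := by
        have := abs_pow_sub_pow_le (n-1) h.1 (le_trans h.2.1 h.2.2) h'.1
          (le_trans h'.2.1 h'.2.2)
        refine le_trans this ?_
        have hcast : ((n - 1 : ℕ) : ℝ) ≤ (n : ℝ) := by exact_mod_cast Nat.sub_le n 1
        exact mul_le_mul_of_nonneg_right hcast (abs_nonneg _)
      have hDDabs : |D' - D| ≤ (n:ℝ) * |s - s'| + ((n:ℝ)^2 + (n:ℝ)) * |t - t'| := by
        rw [eDD]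
        refine le_trans (abs_add_le _ _) ?_
        have hA : |(n : ℝ) * ((s - t) * (t ^ (n-1) - t' ^ (n-1)))| ≤ (n:ℝ)^2 * |t - t'| := by
          rw [abs_mul, abs_mul, Nat.abs_cast]
          calc (n:ℝ) * (|s - t| * |t ^ (n-1) - t' ^ (n-1)|)
              ≤ (n:ℝ) * (1 * ((n:ℝ) * |t - t'|)) := by
                refine mul_le_mul_of_nonneg_left ?_ (Nat.cast_nonneg n)
                exact mul_le_mul hst1 hpowdiff (abs_nonneg _) zero_le_one
            _ = (n:ℝ)^2 * |t - t'| := by ring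
        have hB : |(n : ℝ) * t' ^ (n-1) * ((s - s') - (t - t'))|
            ≤ (n:ℝ) * |s - s'| + (n:ℝ) * |t - t'| := by
          rw [abs_mul, abs_mul, Nat.abs_cast]
          have h1 : |(s - s') - (t - t')| ≤ |s - s'| + |t - t'| := abs_sub _ _
          calc (n:ℝ) * |t' ^ (n-1)| * |(s - s') - (t - t')|
              ≤ (n:ℝ) * 1 * (|s - s'| + |t - t'|) := by
                refine mul_le_mul ?_ h1 (abs_nonneg _) ?_
                · exact mul_le_mul_of_nonneg_left ht'1 (Nat.cast_nonneg n)
                · positivity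
            _ = (n:ℝ) * |s - s'| + (n:ℝ) * |t - t'| := by ring
        linarith
      have hq : |t ^ n - t' ^ n| ≤ (n:ℝ) * |t - t'| :=
        abs_pow_sub_pow_le n h.1 (le_trans h.2.1 h.2.2) h'.1 (le_trans h'.2.1 h'.2.2)
      have habs : t' ^ n * |Ff n s t - Ff n s' t'| ≤ |D' - D| + (n:ℝ) * |t - t'| := by
        have h0 : t' ^ n * |Ff n s t - Ff n s' t'| = |t' ^ n * (Ff n s t - Ff n s' t')| := by
          rw [abs_mul, abs_of_nonneg (pow_nonneg h'.1 n)]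
        rw [h0, e]
        refine le_trans (abs_add_le _ _) ?_
        have hA : |(t ^ n / D) * (t' ^ n / D') * (D' - D)| ≤ |D' - D| := by
          rw [abs_mul]
          calc |t ^ n / D * (t' ^ n / D')| * |D' - D| ≤ 1 * |D' - D| := by
                refine mul_le_mul_of_nonneg_right ?_ (abs_nonneg _)
                rw [abs_mul, abs_of_nonneg hb1', abs_of_nonneg hb2']
                exact (mul_le_mul hb1 hb2 hb2' zero_le_one).trans_eq (one_mul 1)
            _ = |D' - D| := one_mul _
        have hB : |(t' ^ n / D') * (t ^ n - t' ^ n)| ≤ (n:ℝ) * |t - t'| := by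
          rw [abs_mul, abs_of_nonneg hb2']
          calc (t' ^ n / D') * |t ^ n - t' ^ n| ≤ 1 * |t ^ n - t' ^ n| :=
                mul_le_mul_of_nonneg_right hb2 (abs_nonneg _)
            _ = |t ^ n - t' ^ n| := one_mul _
            _ ≤ (n:ℝ) * |t - t'| := hq
        linarith
      have hfin : |D' - D| + (n:ℝ) * |t - t'|
          ≤ (2 * (n:ℝ) ^ 2 + 2 * n) * max (|s - s'|) (|t - t'|) := by
        have m1 : |s - s'| ≤ max (|s - s'|) (|t - t'|) := le_max_left _ _
        have m2 : |t - t'| ≤ max (|s - s'|) (|t - t'|) := le_max_right _ _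
        have hn1 : (1:ℝ) ≤ (n:ℝ) := by exact_mod_cast hn
        have hn0 : (0:ℝ) ≤ (n:ℝ) := by linarith
        have c1 : (n:ℝ) * |s - s'| ≤ (n:ℝ) * max (|s - s'|) (|t - t'|) :=
          mul_le_mul_of_nonneg_left m1 hn0
        have c2 : ((n:ℝ)^2 + n) * |t - t'| ≤ ((n:ℝ)^2 + n) * max (|s - s'|) (|t - t'|) :=
          mul_le_mul_of_nonneg_left m2 (by positivity)
        have c3 : (n:ℝ) * |t - t'| ≤ (n:ℝ) * max (|s - s'|) (|t - t'|) :=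
          mul_le_mul_of_nonneg_left m2 hn0
        have c4 : 0 ≤ ((n:ℝ)^2 - n) * max (|s - s'|) (|t - t'|) :=
          mul_nonneg (by nlinarith [hn1]) hmax0
        linarith
      calc t' ^ n * |Ff n s t - Ff n s' t'| ≤ |D' - D| + (n:ℝ) * |t - t'| := habs
        _ ≤ (2 * (n:ℝ) ^ 2 + 2 * n) * max (|s - s'|) (|t - t'|) := hfin
        _ = (2 * n ^ 2 + 2 * n) * max (|s - s'|) (|t - t'|) := by norm_num

/- ### properties of Gp -/

theorem Gp_nonneg {n : ℕ} {s t : ℝ} (h : Pp s t) : 0 ≤ Gp n s t := by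
  unfold Gp
  have h1 : t ^ n * Ff n s t ≤ t ^ n * 1 :=
    mul_le_mul_of_nonneg_left (Ff_le_one h) (pow_nonneg h.1 n)
  have h2 : t ^ n ≤ s ^ n := pow_le_pow_left₀ h.1 h.2.1 n
  linarith

theorem Gp_mono {n : ℕ} {s t s' : ℝ} (hn : 1 ≤ n) (h : Pp s t) (hs : s ≤ s') (hs' : s' ≤ 1) :
    Gp n s t ≤ Gp n s' t := by
  have h' : Pp s' t := ⟨h.1, le_trans h.2.1 hs, hs'⟩
  have hsn : s ^ n ≤ s' ^ n := pow_le_pow_left₀ (le_trans h.1 h.2.1) hs n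
  by_cases hD' : Dden n s' t = 0
  · obtain ⟨ht0, -, -⟩ := Dden_eq_zero hn h' hD'
    subst ht0
    have hz : (0:ℝ) ^ n = 0 := zero_pow (by omega)
    simp only [Gp, hz, zero_mul, sub_zero]
    exact hsn
  · have hD'pos : 0 < Dden n s' t := lt_of_le_of_ne (Dden_nonneg h') (Ne.symm hD')
    have hDD' : Dden n s' t ≤ Dden n s t := by
      simp only [Dden]
      have : (n : ℝ) * (s - t) * t ^ (n - 1) ≤ (n : ℝ) * (s' - t) * t ^ (n - 1) :=
        mul_le_mul_of_nonneg_right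
          (mul_le_mul_of_nonneg_left (by linarith) (Nat.cast_nonneg n)) (pow_nonneg h.1 _)
      linarith
    have hDpos : 0 < Dden n s t := lt_of_lt_of_le hD'pos hDD'
    have hFf : Ff n s t = t ^ n / Dden n s t := by
      unfold Ff; rw [if_neg]; rintro ⟨-, hc⟩; exact (ne_of_gt hDpos) hc
    have hFf' : Ff n s' t = t ^ n / Dden n s' t := by
      unfold Ff; rw [if_neg]; rintro ⟨-, hc⟩; exact hD' hc
    simp only [Gp, hFf, hFf']
    rw [sub_le_sub_iff]
    -- s ^ n + t ^ n * (t ^ n / Dden n s' t) ≤ s' ^ n + t ^ n * (t ^ n / Dden n s t)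
    have e : t ^ n * (t ^ n / Dden n s' t) - t ^ n * (t ^ n / Dden n s t)
        = (t ^ n / Dden n s t) * (t ^ n / Dden n s' t) * (Dden n s t - Dden n s' t) := by
      field_simp
    have hb1 : t ^ n / Dden n s t ≤ 1 := div_le_one_of_le₀ (Dden_ge h) (le_of_lt hDpos)
    have hb1' : 0 ≤ t ^ n / Dden n s t := div_nonneg (pow_nonneg h.1 n) (le_of_lt hDpos)
    have hb2 : t ^ n / Dden n s' t ≤ 1 := div_le_one_of_le₀ (Dden_ge h') (le_of_lt hD'pos)
    have hb2' : 0 ≤ t ^ n / Dden n s' t := div_nonneg (pow_nonneg h.1 n) (le_of_lt hD'pos)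
    have hdiff : Dden n s t - Dden n s' t = (n : ℝ) * (s' - s) * t ^ (n - 1) := by
      simp only [Dden]; ring
    have hstep1 : (t ^ n / Dden n s t) * (t ^ n / Dden n s' t) * (Dden n s t - Dden n s' t)
        ≤ Dden n s t - Dden n s' t := by
      have hnn : 0 ≤ Dden n s t - Dden n s' t := by linarith
      calc (t ^ n / Dden n s t) * (t ^ n / Dden n s' t) * (Dden n s t - Dden n s' t)
          ≤ 1 * 1 * (Dden n s t - Dden n s' t) := by
            apply mul_le_mul_of_nonneg_right _ hnn
            exact mul_le_mul hb1 hb2 hb2' zero_le_one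
        _ = Dden n s t - Dden n s' t := by ring
    have hstep2 : (n : ℝ) * (s' - s) * t ^ (n - 1) ≤ (n : ℝ) * (s' - s) * s ^ (n - 1) :=
      mul_le_mul_of_nonneg_left
        (pow_le_pow_left₀ h.1 h.2.1 _)
        (mul_nonneg (Nat.cast_nonneg n) (by linarith))
    have hstep3 : (n : ℝ) * s ^ (n - 1) * (s' - s) ≤ s' ^ n - s ^ n :=
      le_pow_sub_pow n (le_trans h.1 h.2.1) hs
    nlinarith [hstep1, hstep2, hstep3, e, hdiff]

/- ### properties of mu and aseq -/

theorem mu_nonneg {n : ℕ} {x : ℕ → ℝ} (hx : Cone x) (k : ℕ) : 0 ≤ mu n x k := by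
  refine Finset.prod_nonneg fun j _ => ?_
  rw [muFactor_eq]
  exact Ff_nonneg (hx.pair j)

theorem mu_le_one {n : ℕ} {x : ℕ → ℝ} (hx : Cone x) (k : ℕ) : mu n x k ≤ 1 := by
  refine Finset.prod_le_one (fun j _ => ?_) (fun j _ => ?_)
  · rw [muFactor_eq]; exact Ff_nonneg (hx.pair j)
  · rw [muFactor_eq]; exact Ff_le_one (hx.pair j)

theorem mu_mono {n : ℕ} {x y : ℕ → ℝ} (hn : 1 ≤ n) (hx : Cone x) (hy : Cone y)
    (hxy : ∀ i, x i ≤ y i) (k : ℕ) : mu n x k ≤ mu n y k := by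
  refine Finset.prod_le_prod (fun j _ => ?_) (fun j _ => ?_)
  · rw [muFactor_eq]; exact Ff_nonneg (hx.pair j)
  · rw [muFactor_eq, muFactor_eq]
    exact Ff_mono hn (hx.pair j) (hy.pair j) (hxy j) (hxy (j + 1))

theorem mu_lip {n : ℕ} (hn : 1 ≤ n) (k : ℕ) {x y : ℕ → ℝ} (hx : Cone x) (hy : Cone y)
    {δ : ℝ} (hδ : 0 ≤ δ) (hd : ∀ j, 1 ≤ j → j ≤ k → |x j - y j| ≤ δ) :
    y k ^ n * |mu n x k - mu n y k| ≤ (2 * n ^ 2 + 2 * n) * k * δ := by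
  induction k with
  | zero => simp [mu]
  | succ k ih =>
    have ih' := ih (fun j hj1 hj2 => hd j hj1 (le_trans hj2 (Nat.le_succ k)))
    have hsucc : mu n x (k + 1) = mu n x k * Ff n (x k) (x (k + 1)) := by
      rw [mu, Finset.prod_range_succ, ← muFactor_eq]; rfl
    have hsucc' : mu n y (k + 1) = mu n y k * Ff n (y k) (y (k + 1)) := by
      rw [mu, Finset.prod_range_succ, ← muFactor_eq]; rfl
    set Mx := mu n x k
    set My := mu n y k
    set Fx := Ff n (x k) (x (k + 1))
    set Fy := Ff n (y k) (y (k + 1))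
    have hMx0 : 0 ≤ Mx := mu_nonneg hx k
    have hMx1 : Mx ≤ 1 := mu_le_one hx k
    have hFy0 : 0 ≤ Fy := Ff_nonneg (hy.pair k)
    have hFy1 : Fy ≤ 1 := Ff_le_one (hy.pair k)
    have hdecomp : |Mx * Fx - My * Fy| ≤ Mx * |Fx - Fy| + Fy * |Mx - My| := by
      have e : Mx * Fx - My * Fy = Mx * (Fx - Fy) + Fy * (Mx - My) := by ring
      rw [e]
      refine le_trans (abs_add_le _ _) ?_
      rw [abs_mul, abs_mul, abs_of_nonneg hMx0, abs_of_nonneg hFy0]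
    have hyk1 : (0:ℝ) ≤ y (k + 1) := (hy.2.2 (k + 1)).1
    have hyn0 : (0:ℝ) ≤ y (k + 1) ^ n := pow_nonneg hyk1 n
    -- term 1
    have hterm1 : y (k + 1) ^ n * (Mx * |Fx - Fy|) ≤ (2 * n ^ 2 + 2 * n) * δ := by
      have h1 : y (k + 1) ^ n * (Mx * |Fx - Fy|) ≤ y (k + 1) ^ n * |Fx - Fy| := by
        refine mul_le_mul_of_nonneg_left ?_ hyn0
        calc Mx * |Fx - Fy| ≤ 1 * |Fx - Fy| :=
              mul_le_mul_of_nonneg_right hMx1 (abs_nonneg _)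
          _ = |Fx - Fy| := one_mul _
      have h2 := Ff_lip (n := n) hn (hx.pair k) (hy.pair k)
      have h3 : max (|x k - y k|) (|x (k + 1) - y (k + 1)|) ≤ δ := by
        refine max_le ?_ (hd (k + 1) (by omega) (le_refl _))
        rcases Nat.eq_zero_or_pos k with hk0 | hk0
        · subst hk0; rw [hx.1, hy.1]; simpa using hδ
        · exact hd k (by omega) (by omega)
      have h4 : (2 * (n:ℝ) ^ 2 + 2 * n) * max (|x k - y k|) (|x (k + 1) - y (k + 1)|)
          ≤ (2 * (n:ℝ) ^ 2 + 2 * n) * δ :=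
        mul_le_mul_of_nonneg_left h3 (by positivity)
      calc y (k + 1) ^ n * (Mx * |Fx - Fy|) ≤ y (k + 1) ^ n * |Fx - Fy| := h1
        _ ≤ (2 * (n:ℝ) ^ 2 + 2 * n) * max (|x k - y k|) (|x (k + 1) - y (k + 1)|) := h2
        _ ≤ (2 * (n:ℝ) ^ 2 + 2 * n) * δ := h4
    -- term 2
    have hterm2 : y (k + 1) ^ n * (Fy * |Mx - My|) ≤ (2 * n ^ 2 + 2 * n) * k * δ := by
      have h1 : y (k + 1) ^ n * (Fy * |Mx - My|) ≤ y k ^ n * |Mx - My| := by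
        have hy1 : y (k + 1) ^ n ≤ y k ^ n := pow_le_pow_left₀ hyk1 (hy.2.1 k) n
        have e1 : y (k + 1) ^ n * (Fy * |Mx - My|) = (y (k + 1) ^ n * Fy) * |Mx - My| := by
          ring
        rw [e1]
        refine mul_le_mul_of_nonneg_right ?_ (abs_nonneg _)
        calc y (k + 1) ^ n * Fy ≤ y (k + 1) ^ n * 1 :=
              mul_le_mul_of_nonneg_left hFy1 hyn0
          _ = y (k + 1) ^ n := mul_one _
          _ ≤ y k ^ n := hy1
      exact le_trans h1 ih'
    have hsum : y (k + 1) ^ n * |mu n x (k + 1) - mu n y (k + 1)|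
        ≤ (2 * n ^ 2 + 2 * n) * δ + (2 * n ^ 2 + 2 * n) * k * δ := by
      rw [hsucc, hsucc']
      calc y (k + 1) ^ n * |Mx * Fx - My * Fy|
          ≤ y (k + 1) ^ n * (Mx * |Fx - Fy| + Fy * |Mx - My|) :=
            mul_le_mul_of_nonneg_left hdecomp hyn0
        _ = y (k + 1) ^ n * (Mx * |Fx - Fy|) + y (k + 1) ^ n * (Fy * |Mx - My|) := by ring
        _ ≤ (2 * n ^ 2 + 2 * n) * δ + (2 * n ^ 2 + 2 * n) * k * δ := by
            exact add_le_add hterm1 hterm2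
    refine le_trans hsum ?_
    push_cast
    ring_nf
    nlinarith [hδ]

theorem aseq_lip {n : ℕ} (hn : 1 ≤ n) (k : ℕ) {x y : ℕ → ℝ} (hx : Cone x) (hy : Cone y)
    {δ : ℝ} (hδ : 0 ≤ δ) (hd : ∀ j, 1 ≤ j → j ≤ k → |x j - y j| ≤ δ) :
    |aseq n x k - aseq n y k| ≤ ((n : ℝ) + (2 * n ^ 2 + 2 * n) * k) * δ := by
  rcases Nat.eq_zero_or_pos k with hk0 | hk0
  · subst hk0
    have : aseq n x 0 = aseq n y 0 := by
      unfold aseq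
      rw [hx.1, hy.1]
      simp [mu]
    rw [this, sub_self, abs_zero]
    positivity
  · have hMx0 : 0 ≤ mu n x k := mu_nonneg hx k
    have hMx1 : mu n x k ≤ 1 := mu_le_one hx k
    have hyk0 : (0:ℝ) ≤ y k := (hy.2.2 k).1
    have hyn0 : (0:ℝ) ≤ y k ^ n := pow_nonneg hyk0 n
    have e : aseq n x k - aseq n y k
        = mu n x k * (x k ^ n - y k ^ n) + y k ^ n * (mu n x k - mu n y k) := by
      unfold aseq; ring
    have h1 : |mu n x k * (x k ^ n - y k ^ n)| ≤ (n : ℝ) * δ := by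
      rw [abs_mul, abs_of_nonneg hMx0]
      have hb : |x k ^ n - y k ^ n| ≤ (n:ℝ) * |x k - y k| :=
        abs_pow_sub_pow_le n (hx.2.2 k).1 (hx.2.2 k).2 hyk0 (hy.2.2 k).2
      have hb2 : |x k - y k| ≤ δ := hd k hk0 (le_refl k)
      calc mu n x k * |x k ^ n - y k ^ n| ≤ 1 * |x k ^ n - y k ^ n| :=
            mul_le_mul_of_nonneg_right hMx1 (abs_nonneg _)
        _ = |x k ^ n - y k ^ n| := one_mul _
        _ ≤ (n:ℝ) * |x k - y k| := hb
        _ ≤ (n:ℝ) * δ := mul_le_mul_of_nonneg_left hb2 (Nat.cast_nonneg n)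
    have h2 : |y k ^ n * (mu n x k - mu n y k)| ≤ (2 * n ^ 2 + 2 * n) * k * δ := by
      rw [abs_mul, abs_of_nonneg hyn0]
      exact mu_lip hn k hx hy hδ hd
    calc |aseq n x k - aseq n y k|
        ≤ |mu n x k * (x k ^ n - y k ^ n)| + |y k ^ n * (mu n x k - mu n y k)| := by
          rw [e]; exact abs_add_le _ _
      _ ≤ (n : ℝ) * δ + (2 * n ^ 2 + 2 * n) * k * δ := add_le_add h1 h2
      _ = ((n : ℝ) + (2 * n ^ 2 + 2 * n) * k) * δ := by ring

/- ### the one-sided Lipschitz bound for the vector field -/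

theorem osl {lam : ℝ} (hlam0 : 0 ≤ lam) (hlam1 : lam ≤ 1) {n : ℕ} (hn : 1 ≤ n)
    {k : ℕ} (hk : 1 ≤ k) {x y : ℕ → ℝ} (hx : Cone x) (hy : Cone y) (hyx : y k ≤ x k)
    {δ : ℝ} (hδ : 0 ≤ δ) (hd : ∀ j, 1 ≤ j → j ≤ k + 1 → x j - y j ≤ δ) :
    vfield lam n x k - vfield lam n y k ≤ ((4 * n ^ 2 + 6 * n + 1 : ℝ) * (k + 1)) * δ := by
  obtain ⟨j, rfl⟩ : ∃ j, k = j + 1 := ⟨k - 1, by omega⟩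
  classical
  set M : ℕ → ℝ := fun i => if i < j + 1 then max (x i) (y i) else x i with hM
  have hMx : ∀ i, x i ≤ M i := by
    intro i
    by_cases hi : i < j + 1
    · simp only [hM, if_pos hi]; exact le_max_left _ _
    · simp only [hM, if_neg hi]; exact le_refl _
  have hMj1 : M (j + 1) = x (j + 1) := by simp [hM]
  have hMj : M j = max (x j) (y j) := by simp [hM]
  have hMcone : Cone M := by
    refine ⟨?_, ?_, ?_⟩
    · simp only [hM, if_pos (Nat.succ_pos j), hx.1, hy.1, max_self]
    · intro i
      by_cases h1 : i + 1 < j + 1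
      · have h2 : i < j + 1 := by omega
        simp only [hM, if_pos h1, if_pos h2]
        exact max_le_max (hx.2.1 i) (hy.2.1 i)
      · simp only [hM, if_neg h1]
        by_cases h2 : i < j + 1
        · simp only [if_pos h2]
          exact le_trans (hx.2.1 i) (le_max_left _ _)
        · simp only [if_neg h2]
          exact hx.2.1 i
    · intro i
      by_cases h1 : i < j + 1
      · simp only [hM, if_pos h1]
        constructor
        · exact le_trans (hx.2.2 i).1 (le_max_left _ _)
        · exact max_le (hx.2.2 i).2 (hy.2.2 i).2
      · simp only [hM, if_neg h1]
        exact hx.2.2 i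
  -- factorization identity
  have hfact : ∀ z : ℕ → ℝ, aseq n z j - aseq n z (j + 1)
      = mu n z j * Gp n (z j) (z (j + 1)) := by
    intro z
    have hsucc : mu n z (j + 1) = mu n z j * Ff n (z j) (z (j + 1)) := by
      rw [mu, Finset.prod_range_succ, ← muFactor_eq]; rfl
    unfold aseq Gp
    rw [hsucc]
    ring
  -- vfield in terms of aseq
  have hv : ∀ (z : ℕ → ℝ), vfield lam n z (j + 1)
      = lam * (aseq n z j - aseq n z (j + 1)) - (z (j + 1) - z (j + 1 + 1)) := by
    intro z
    unfold vfield aseq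
    rw [show j + 1 - 1 = j from rfl]
    ring
  -- step 1 : A_x ≤ A_M
  have hxj1Mj : x (j + 1) ≤ M j := le_trans (hx.2.1 j) (hMj ▸ le_max_left _ _)
  have hstep1 : aseq n x j - aseq n x (j + 1) ≤ aseq n M j - aseq n M (j + 1) := by
    rw [hfact x, hfact M, hMj1]
    have g1 : Gp n (x j) (x (j + 1)) ≤ Gp n (M j) (x (j + 1)) := by
      refine Gp_mono hn (hx.pair j) (hMj ▸ le_max_left _ _) ?_
      exact (hMcone.2.2 j).2
    have g2 : 0 ≤ Gp n (M j) (x (j + 1)) :=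
      Gp_nonneg ⟨(hx.2.2 (j + 1)).1, hxj1Mj, (hMcone.2.2 j).2⟩
    have g3 : mu n x j ≤ mu n M j := mu_mono hn hx hMcone hMx j
    calc mu n x j * Gp n (x j) (x (j + 1))
        ≤ mu n x j * Gp n (M j) (x (j + 1)) :=
          mul_le_mul_of_nonneg_left g1 (mu_nonneg hx j)
      _ ≤ mu n M j * Gp n (M j) (x (j + 1)) :=
          mul_le_mul_of_nonneg_right g3 g2
  -- step 2 : A_M - A_y is controlled
  have hdM : ∀ i, 1 ≤ i → i ≤ j + 1 → |M i - y i| ≤ δ := by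
    intro i h1 h2
    by_cases hi : i < j + 1
    · simp only [hM, if_pos hi]
      rw [abs_of_nonneg (by simp [sub_nonneg])]
      have hxi : x i ≤ y i + δ := by
        have := hd i h1 (by omega); linarith
      have hyi : y i ≤ y i + δ := by linarith
      have := max_le hxi hyi
      linarith
    · have hieq : i = j + 1 := by omega
      subst hieq
      simp only [hM, if_neg hi]
      rw [abs_of_nonneg (by linarith [hyx])]
      exact hd (j + 1) h1 (by omega)
  have l1 : |aseq n M j - aseq n y j| ≤ ((n : ℝ) + (2 * n ^ 2 + 2 * n) * j) * δ :=
    aseq_lip hn j hMcone hy hδ (fun i hi1 hi2 => hdM i hi1 (by omega))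
  have l2 : |aseq n M (j + 1) - aseq n y (j + 1)|
      ≤ ((n : ℝ) + (2 * n ^ 2 + 2 * n) * (j + 1)) * δ := by
    have := aseq_lip hn (j + 1) hMcone hy hδ hdM
    push_cast at this ⊢
    exact this
  have hstep2 : (aseq n M j - aseq n M (j + 1)) - (aseq n y j - aseq n y (j + 1))
      ≤ ((n : ℝ) + (2 * n ^ 2 + 2 * n) * j) * δ
        + ((n : ℝ) + (2 * n ^ 2 + 2 * n) * (j + 1)) * δ := by
    have e1 := le_abs_self (aseq n M j - aseq n y j)
    have e2 := neg_abs_le (aseq n M (j + 1) - aseq n y (j + 1))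
    push_cast at l1 l2 ⊢
    linarith
  -- assemble
  rw [hv x, hv y]
  have hAd : (aseq n x j - aseq n x (j + 1)) - (aseq n y j - aseq n y (j + 1))
      ≤ ((n : ℝ) + (2 * n ^ 2 + 2 * n) * j) * δ
        + ((n : ℝ) + (2 * n ^ 2 + 2 * n) * (j + 1)) * δ := by
    push_cast at hstep2 ⊢
    linarith [hstep1]
  have hB0 : 0 ≤ ((n : ℝ) + (2 * n ^ 2 + 2 * n) * j) * δ
      + ((n : ℝ) + (2 * n ^ 2 + 2 * n) * (j + 1)) * δ := by positivity
  have hlam' : lam * ((aseq n x j - aseq n x (j + 1)) - (aseq n y j - aseq n y (j + 1)))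
      ≤ ((n : ℝ) + (2 * n ^ 2 + 2 * n) * j) * δ
        + ((n : ℝ) + (2 * n ^ 2 + 2 * n) * (j + 1)) * δ := by
    calc lam * ((aseq n x j - aseq n x (j + 1)) - (aseq n y j - aseq n y (j + 1)))
        ≤ lam * (((n : ℝ) + (2 * n ^ 2 + 2 * n) * j) * δ
          + ((n : ℝ) + (2 * n ^ 2 + 2 * n) * (j + 1)) * δ) :=
          mul_le_mul_of_nonneg_left hAd hlam0
      _ ≤ 1 * (((n : ℝ) + (2 * n ^ 2 + 2 * n) * j) * δ
          + ((n : ℝ) + (2 * n ^ 2 + 2 * n) * (j + 1)) * δ) :=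
          mul_le_mul_of_nonneg_right hlam1 hB0
      _ = _ := one_mul _
  have hterm3 : x (j + 1 + 1) - y (j + 1 + 1) ≤ δ := hd (j + 1 + 1) (by omega) (by omega)
  have hterm4 : 0 ≤ x (j + 1) - y (j + 1) := by linarith [hyx]
  have hn1 : (1 : ℝ) ≤ (n : ℝ) := by exact_mod_cast hn
  have hj0 : (0 : ℝ) ≤ (j : ℝ) := Nat.cast_nonneg j
  have harith : ((n : ℝ) + (2 * n ^ 2 + 2 * n) * j) * δ
      + ((n : ℝ) + (2 * n ^ 2 + 2 * n) * (j + 1)) * δ + δ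
      ≤ ((4 * (n:ℝ) ^ 2 + 6 * n + 1) * ((j : ℝ) + 1 + 1)) * δ := by
    nlinarith [hδ, hn1, hj0, mul_nonneg hj0 hδ, mul_nonneg (mul_nonneg hj0 hj0) hδ]
  push_cast
  push_cast at hlam'
  nlinarith [hlam', hterm3, hterm4, harith, hlam0, hδ]

/- ### the no-upcrossing lemma -/

theorem noUp {a b : ℝ} (hab : a ≤ b) {h h' : ℝ → ℝ}
    (hd : ∀ t ∈ Set.Icc a b, HasDerivWithinAt h (h' t) (Set.Icc a b) t)
    (ha : h a ≤ 0) (hneg : ∀ t ∈ Set.Icc a b, 0 < h t → h' t ≤ 0) :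
    ∀ t ∈ Set.Icc a b, h t ≤ 0 := by
  intro t ht
  by_contra hpos
  push_neg at hpos
  have hcont : ContinuousOn h (Set.Icc a b) := fun u hu => (hd u hu).continuousWithinAt
  set S : Set ℝ := Set.Icc a t ∩ h ⁻¹' Set.Iic 0 with hS
  have hSsub : S ⊆ Set.Icc a t := Set.inter_subset_left
  have hIcc_sub : Set.Icc a t ⊆ Set.Icc a b := Set.Icc_subset_Icc_right ht.2
  have hSclosed : IsClosed S :=
    (hcont.mono hIcc_sub).preimage_isClosed_of_isClosed isClosed_Icc isClosed_Iic
  have hScmp : IsCompact S := isCompact_Icc.of_isClosed_subset hSclosed hSsub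
  have haS : a ∈ S := ⟨⟨le_refl a, ht.1⟩, by simpa using ha⟩
  have hSne : S.Nonempty := ⟨a, haS⟩
  have hcS : sSup S ∈ S := hScmp.sSup_mem hSne
  set cc := sSup S with hccdef
  have hct : cc ≤ t := (hSsub hcS).2
  have hac : a ≤ cc := (hSsub hcS).1
  have hhc : h cc ≤ 0 := hcS.2
  have hcltt : cc < t := by
    rcases lt_or_eq_of_le hct with h1 | h1
    · exact h1
    · exfalso; rw [h1] at hhc; linarith
  have hposIoc : ∀ u ∈ Set.Ioc cc t, 0 < h u := by
    intro u hu
    by_contra hle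
    push_neg at hle
    have huS : u ∈ S := ⟨⟨le_trans hac (le_of_lt hu.1), hu.2⟩, by simpa using hle⟩
    have := le_csSup hScmp.bddAbove huS
    rw [← hccdef] at this
    linarith [hu.1]
  have hmono : AntitoneOn h (Set.Icc cc t) := by
    apply antitoneOn_of_deriv_nonpos (convex_Icc cc t)
    · exact hcont.mono (Set.Icc_subset_Icc hac ht.2)
    · intro u hu
      rw [interior_Icc] at hu
      have hu' : u ∈ Set.Icc a b :=
        ⟨le_trans hac (le_of_lt hu.1), le_trans (le_of_lt hu.2) ht.2⟩
      have hder : HasDerivAt h (h' u) u :=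
        (hd u hu').hasDerivAt (Icc_mem_nhds (lt_of_le_of_lt hac hu.1)
          (lt_of_lt_of_le hu.2 ht.2))
      exact hder.differentiableAt.differentiableWithinAt
    · intro u hu
      rw [interior_Icc] at hu
      have hu' : u ∈ Set.Icc a b :=
        ⟨le_trans hac (le_of_lt hu.1), le_trans (le_of_lt hu.2) ht.2⟩
      have hder : HasDerivAt h (h' u) u :=
        (hd u hu').hasDerivAt (Icc_mem_nhds (lt_of_le_of_lt hac hu.1)
          (lt_of_lt_of_le hu.2 ht.2))
      rw [hder.deriv]
      exact hneg u hu' (hposIoc u ⟨hu.1, le_of_lt hu.2⟩)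
  have hfin := hmono (Set.left_mem_Icc.2 (le_of_lt hcltt))
    (Set.right_mem_Icc.2 (le_of_lt hcltt)) (le_of_lt hcltt)
  linarith

theorem prod_range_le {k m : ℕ} :
    ∏ i ∈ Finset.range m, (k + i + 1) ≤ 2 ^ (k + m) * m.factorial := by
  have h1 : k.factorial * ∏ i ∈ Finset.range m, (k + i + 1) = (k + m).factorial := by
    induction m with
    | zero => simp
    | succ m ih =>
      rw [Finset.prod_range_succ, ← mul_assoc, ih,
        show k + (m + 1) = (k + m) + 1 from rfl, Nat.factorial_succ]
      ring
  have h2 : (k + m).choose k * k.factorial * m.factorial = (k + m).factorial := by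
    have := Nat.choose_mul_factorial_mul_factorial (show k ≤ k + m from Nat.le_add_right k m)
    simpa using this
  have h3 : (k + m).choose k ≤ 2 ^ (k + m) := by
    calc (k + m).choose k ≤ ∑ i ∈ Finset.range (k + m + 1), (k + m).choose i :=
          Finset.single_le_sum (f := fun i => (k + m).choose i)
            (fun i _ => Nat.zero_le _) (Finset.mem_range.2 (by omega))
      _ = 2 ^ (k + m) := Nat.sum_range_choose (k + m)
  have h4 : ∏ i ∈ Finset.range m, (k + i + 1) = (k + m).choose k * m.factorial := by
    have hkpos : 0 < k.factorial := k.factorial_pos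
    apply Nat.eq_of_mul_eq_mul_left hkpos
    rw [h1, ← h2]; ring
  rw [h4]
  exact Nat.mul_le_mul_right _ h3

end Stmt1Aux

/-- comparison of solutions of ż = v(z) in D. -/
theorem stmt1 (lam : ℝ) (hlam0 : 0 < lam) (hlam1 : lam < 1) (n : ℕ) (hn : 1 ≤ n)
    (z w : ℕ → ℝ → ℝ) (hz : IsSolution lam n z) (hw : IsSolution lam n w)
    (h0 : ∀ k, 1 ≤ k → z k 0 ≤ w k 0) :
    ∀ k, 1 ≤ k → ∀ t : ℝ, 0 ≤ t → z k t ≤ w k t := by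
  classical
  open Stmt1Aux in
  have hzc : ∀ t : ℝ, 0 ≤ t → Stmt1Aux.Cone (fun k => z k t) := fun t ht =>
    ⟨(hz.1 t ht).1, (hz.1 t ht).2.1, (hz.1 t ht).2.2.1⟩
  have hwc : ∀ t : ℝ, 0 ≤ t → Stmt1Aux.Cone (fun k => w k t) := fun t ht =>
    ⟨(hw.1 t ht).1, (hw.1 t ht).2.1, (hw.1 t ht).2.2.1⟩
  have hn1 : (1 : ℝ) ≤ (n : ℝ) := by exact_mod_cast hn
  set KR : ℝ := 4 * n ^ 2 + 6 * n + 1 with hKRdef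
  have hKRpos : 0 < KR := by positivity
  set T : ℝ := 1 / (4 * KR) with hTdef
  have hTpos : 0 < T := by positivity
  have hKT : KR * T = 1 / 4 := by
    rw [hTdef]; field_simp
  -- the Picard constants
  set c : ℕ → ℕ → ℝ := fun m k => ∏ i ∈ Finset.range m, (KR * ((k : ℝ) + i + 1)) with hcdef
  have hc0 : ∀ m k, 0 ≤ c m k := by
    intro m k
    refine Finset.prod_nonneg fun i _ => ?_
    positivity
  have hcmono : ∀ m k k', k ≤ k' → c m k ≤ c m k' := by
    intro m k k' hkk
    refine Finset.prod_le_prod (fun i _ => by positivity) (fun i _ => ?_)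
    have : ((k : ℝ)) ≤ (k' : ℝ) := by exact_mod_cast hkk
    nlinarith [hKRpos]
  have hcsucc : ∀ m k, c (m + 1) k = KR * ((k : ℝ) + 1) * c m (k + 1) := by
    intro m k
    simp only [hcdef]
    rw [Finset.prod_range_succ']
    have e : ∀ i ∈ Finset.range m,
        KR * ((k : ℝ) + ((i + 1 : ℕ) : ℝ) + 1) = KR * (((k + 1 : ℕ) : ℝ) + (i : ℝ) + 1) :=
      fun i _ => by push_cast; ring
    rw [Finset.prod_congr rfl e]
    push_cast
    ring
  have hcbound : ∀ m k, c m k * T ^ m / (m.factorial : ℝ) ≤ 2 ^ k * (1 / 2) ^ m := by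
    intro m k
    have hfacpos : (0 : ℝ) < (m.factorial : ℝ) := by exact_mod_cast m.factorial_pos
    have hP : c m k = KR ^ m * ((∏ i ∈ Finset.range m, (k + i + 1) : ℕ) : ℝ) := by
      simp only [hcdef]
      rw [Finset.prod_mul_distrib, Finset.prod_const, Finset.card_range, Nat.cast_prod]
      congr 1
      refine Finset.prod_congr rfl fun i _ => ?_
      push_cast; ring
    have hPle : ((∏ i ∈ Finset.range m, (k + i + 1) : ℕ) : ℝ)
        ≤ ((2 ^ (k + m) * m.factorial : ℕ) : ℝ) := by
      exact_mod_cast Stmt1Aux.prod_range_le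
    have e1 : c m k * T ^ m = (1 / 4) ^ m * ((∏ i ∈ Finset.range m, (k + i + 1) : ℕ) : ℝ) := by
      rw [hP, ← hKT, mul_pow]; ring
    have e2 : (1 / 4 : ℝ) ^ m * ((2 ^ (k + m) * m.factorial : ℕ) : ℝ) / (m.factorial : ℝ)
        = 2 ^ k * (1 / 2) ^ m := by
      push_cast
      rw [pow_add]
      field_simp
      rw [← mul_pow]; norm_num
    rw [e1]
    rw [div_le_iff₀ hfacpos]
    calc (1 / 4) ^ m * ((∏ i ∈ Finset.range m, (k + i + 1) : ℕ) : ℝ)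
        ≤ (1 / 4) ^ m * ((2 ^ (k + m) * m.factorial : ℕ) : ℝ) := by
          refine mul_le_mul_of_nonneg_left hPle (by positivity)
      _ = 2 ^ k * (1 / 2) ^ m * (m.factorial : ℝ) := by
          rw [← e2]; field_simp
  -- the small-time comparison step
  have main : ∀ t₀ : ℝ, 0 ≤ t₀ → (∀ k, 1 ≤ k → z k t₀ - w k t₀ ≤ 0) →
      ∀ t ∈ Set.Icc t₀ (t₀ + T), ∀ k, 1 ≤ k → z k t - w k t ≤ 0 := by
    intro t₀ ht₀ hinit
    have hsubIci : Set.Icc t₀ (t₀ + T) ⊆ Set.Ici (0 : ℝ) := fun v hv => le_trans ht₀ hv.1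
    have claim : ∀ m : ℕ, ∀ k, 1 ≤ k → ∀ t ∈ Set.Icc t₀ (t₀ + T),
        z k t - w k t ≤ c m k * (t - t₀) ^ m / (m.factorial : ℝ) := by
      intro m
      induction m with
      | zero =>
        intro k hk t htIcc
        have ht' : (0 : ℝ) ≤ t := le_trans ht₀ htIcc.1
        have h1 : z k t ≤ 1 := ((hz.1 t ht').2.2.1 k).2
        have h2 : 0 ≤ w k t := ((hw.1 t ht').2.2.1 k).1
        simp only [hcdef, Finset.range_zero, Finset.prod_empty, pow_zero,
          Nat.factorial_zero, Nat.cast_one]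
        norm_num
        linarith
      | succ m ih =>
        intro k hk t htIcc
        have hfm : (((m + 1).factorial : ℕ) : ℝ) = ((m : ℝ) + 1) * (m.factorial : ℝ) := by
          rw [Nat.factorial_succ]; push_cast; ring
        have hfacpos : (0 : ℝ) < (m.factorial : ℝ) := by exact_mod_cast m.factorial_pos
        have hfacpos' : (0 : ℝ) < ((m + 1).factorial : ℝ) := by
          exact_mod_cast (m + 1).factorial_pos
        set φ : ℝ → ℝ := fun u => z k u - w k u
          - c (m + 1) k * (u - t₀) ^ (m + 1) / (((m + 1).factorial : ℕ) : ℝ) with hφdef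
        set ψ : ℝ → ℝ := fun u => vfield lam n (fun i => z i u) k
          - vfield lam n (fun i => w i u) k
          - c (m + 1) k * (u - t₀) ^ m / (m.factorial : ℝ) with hψdef
        have hφd : ∀ u ∈ Set.Icc t₀ (t₀ + T),
            HasDerivWithinAt φ (ψ u) (Set.Icc t₀ (t₀ + T)) u := by
          intro u hu
          have hu0 : (0 : ℝ) ≤ u := le_trans ht₀ hu.1
          have d1 : HasDerivWithinAt (z k) (vfield lam n (fun i => z i u) k)
              (Set.Icc t₀ (t₀ + T)) u := (hz.2 k hk u hu0).mono hsubIci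
          have d2 : HasDerivWithinAt (w k) (vfield lam n (fun i => w i u) k)
              (Set.Icc t₀ (t₀ + T)) u := (hw.2 k hk u hu0).mono hsubIci
          have dpoly : HasDerivAt (fun v : ℝ => (v - t₀) ^ (m + 1))
              (((m : ℝ) + 1) * (u - t₀) ^ m) u := by
            have h1 : HasDerivAt (fun v : ℝ => v - t₀) 1 u := (hasDerivAt_id u).sub_const t₀
            have h2 := h1.fun_pow (m + 1)
            simpa using h2
          have d3 : HasDerivWithinAt
              (fun v => c (m + 1) k * (v - t₀) ^ (m + 1) / (((m + 1).factorial : ℕ) : ℝ))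
              ((c (m + 1) k * (((m : ℝ) + 1) * (u - t₀) ^ m)) / (((m + 1).factorial : ℕ) : ℝ))
              (Set.Icc t₀ (t₀ + T)) u :=
            (((dpoly.const_mul (c (m + 1) k)).div_const _)).hasDerivWithinAt
          have hcomb := (d1.sub d2).sub d3
          have heq : vfield lam n (fun i => z i u) k - vfield lam n (fun i => w i u) k
              - (c (m + 1) k * (((m : ℝ) + 1) * (u - t₀) ^ m)) / (((m + 1).factorial : ℕ) : ℝ)
              = ψ u := by
            simp only [hψdef]
            rw [hfm]
            field_simp
          rw [heq] at hcomb
          exact hcomb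
        have hφa : φ t₀ ≤ 0 := by
          simp only [hφdef, sub_self, zero_pow (Nat.succ_ne_zero m), mul_zero, zero_div]
          simpa using hinit k hk
        have hφneg : ∀ u ∈ Set.Icc t₀ (t₀ + T), 0 < φ u → ψ u ≤ 0 := by
          intro u hu hφu
          have hu0 : (0 : ℝ) ≤ u := le_trans ht₀ hu.1
          have hut₀ : (0 : ℝ) ≤ u - t₀ := by linarith [hu.1]
          have hCnn : 0 ≤ c (m + 1) k * (u - t₀) ^ (m + 1) / (((m + 1).factorial : ℕ) : ℝ) := by
            have := hc0 (m + 1) k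
            positivity
          have hzw : w k u < z k u := by
            simp only [hφdef] at hφu
            linarith
          set δ : ℝ := c m (k + 1) * (u - t₀) ^ m / (m.factorial : ℝ) with hδdef
          have hδnn : 0 ≤ δ := by
            have := hc0 m (k + 1)
            positivity
          have hdj : ∀ i, 1 ≤ i → i ≤ k + 1 → (fun i => z i u) i - (fun i => w i u) i ≤ δ := by
            intro i hi1 hi2
            have h1 := ih i hi1 u hu
            have h2 : c m i ≤ c m (k + 1) := hcmono m i (k + 1) hi2
            have h3 : c m i * (u - t₀) ^ m / (m.factorial : ℝ)
                ≤ c m (k + 1) * (u - t₀) ^ m / (m.factorial : ℝ) := by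
              apply div_le_div_of_nonneg_right ?_ hfacpos.le
              exact mul_le_mul_of_nonneg_right h2 (pow_nonneg hut₀ m)
            show z i u - w i u ≤ δ
            linarith [h1, h3]
          have hosl := Stmt1Aux.osl (le_of_lt hlam0) (le_of_lt hlam1) hn hk
            (hzc u hu0) (hwc u hu0) (le_of_lt hzw) hδnn hdj
          have hkey : ((4 * (n : ℝ) ^ 2 + 6 * n + 1) * ((k : ℝ) + 1)) * δ
              = c (m + 1) k * (u - t₀) ^ m / (m.factorial : ℝ) := by
            rw [hδdef, hcsucc m k, ← hKRdef]
            ring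
          simp only [hψdef]
          rw [← hkey]
          linarith [hosl]
        have hres := Stmt1Aux.noUp (by linarith [hTpos] : t₀ ≤ t₀ + T) hφd hφa hφneg t htIcc
        simp only [hφdef] at hres
        push_cast at hres ⊢
        linarith
    -- pass to the limit
    intro t htIcc k hk
    have hlim : Filter.Tendsto (fun m : ℕ => (2 : ℝ) ^ k * (1 / 2) ^ m)
        Filter.atTop (nhds 0) := by
      have h1 : Filter.Tendsto (fun m : ℕ => ((1 : ℝ) / 2) ^ m) Filter.atTop (nhds 0) :=
        tendsto_pow_atTop_nhds_zero_of_lt_one (by norm_num) (by norm_num)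
      have := h1.const_mul ((2 : ℝ) ^ k)
      simpa using this
    refine ge_of_tendsto hlim (Filter.Eventually.of_forall fun m => ?_)
    have h1 := claim m k hk t htIcc
    have h2 : c m k * (t - t₀) ^ m / (m.factorial : ℝ)
        ≤ c m k * T ^ m / (m.factorial : ℝ) := by
      have hfacpos : (0 : ℝ) < (m.factorial : ℝ) := by exact_mod_cast m.factorial_pos
      apply div_le_div_of_nonneg_right ?_ hfacpos.le
      refine mul_le_mul_of_nonneg_left ?_ (hc0 m k)
      refine pow_le_pow_left₀ (by linarith [htIcc.1]) (by linarith [htIcc.2]) m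
    linarith [hcbound m k]
  -- global time-stepping
  have step : ∀ N : ℕ, ∀ t : ℝ, 0 ≤ t → t ≤ N * T → ∀ k, 1 ≤ k → z k t - w k t ≤ 0 := by
    intro N
    induction N with
    | zero =>
      intro t h0t h1t k hk
      have ht0 : t = 0 := le_antisymm (by simpa using h1t) h0t
      subst ht0
      linarith [h0 k hk]
    | succ N ih =>
      intro t h0t h1t k hk
      by_cases hle : t ≤ N * T
      · exact ih t h0t hle k hk
      · push_neg at hle
        have hNT0 : (0 : ℝ) ≤ (N : ℝ) * T := by positivity
        have hIH : ∀ k, 1 ≤ k → z k ((N : ℝ) * T) - w k ((N : ℝ) * T) ≤ 0 :=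
          fun k hk => ih ((N : ℝ) * T) hNT0 (le_refl _) k hk
        have hmem : t ∈ Set.Icc ((N : ℝ) * T) ((N : ℝ) * T + T) := by
          constructor
          · exact le_of_lt hle
          · push_cast at h1t
            linarith
        exact main ((N : ℝ) * T) hNT0 hIH t hmem k hk
  intro k hk t ht
  obtain ⟨N, hN⟩ := exists_nat_ge (t / T)
  have htN : t ≤ (N : ℝ) * T := by
    rw [div_le_iff₀ hTpos] at hN
    linarith
  linarith [step N t ht htN k hk]

end
end

section
/- There is a constant C = C(λ,n) with 1 ≤ C < ∞ such that for all k ≥ 0: C^{−1} a_k^α ≤ a_{k+1} ≤ C a_k^α, where α = n + 1/2 + √(n² + 1/4). -/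
open Filter

noncomputable section

set_option maxHeartbeats 1000000 in
/-- there is C = C(λ,n) ≥ 1 with C⁻¹ a_k^α ≤ a_(k+1) ≤ C a_k^α. -/
theorem stmt4 (lam : ℝ) (hlam0 : 0 < lam) (hlam1 : lam < 1) (n : ℕ) (hn : 1 ≤ n)
    (a : ℕ → ℝ) (ha0 : a 0 = 1)
    (harec : ∀ k, a (k + 1) = lam * a k ^ n * mu n a k)
    (haD : memD a) (hapos : ∀ k, 0 < a k)
    (alpha : ℝ) (halpha : alpha = (n : ℝ) + 1 / 2 + Real.sqrt ((n : ℝ) ^ 2 + 1 / 4)) :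
    ∃ C : ℝ, 1 ≤ C ∧ ∀ k : ℕ,
      C⁻¹ * a k ^ alpha ≤ a (k + 1) ∧ a (k + 1) ≤ C * a k ^ alpha := by
  have hn1 : (1:ℝ) ≤ n := by exact_mod_cast hn
  have hsq : Real.sqrt ((n:ℝ)^2 + 1/4) ^ 2 = (n:ℝ)^2 + 1/4 :=
    Real.sq_sqrt (by positivity)
  have hsnn : 0 ≤ Real.sqrt ((n:ℝ)^2 + 1/4) := Real.sqrt_nonneg _
  set β : ℝ := (2*(n:ℝ)+1) - alpha with hβdef
  have hαβ : β * alpha = n := by rw [hβdef, halpha]; nlinarith [hsq]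
  have hβpos : 0 < β := by rw [hβdef, halpha]; nlinarith [hsq, hsnn]
  have hβle : β ≤ 1 := by rw [hβdef, halpha]; nlinarith [hsq, hsnn]
  -- key product identity
  have key : ∀ k : ℕ, a (k+2) * (a k ^ n * (1 - pcoef n a k)) = a (k+1) ^ (2*n+1) := by
    intro k
    have h1 := harec k
    have h2 := harec (k+1)
    have hmu : mu n a (k+1) = mu n a k * muFactor n a k := Finset.prod_range_succ _ _
    have hane : a (k+1) ^ n ≠ 0 := pow_ne_zero _ (hapos _).ne'
    have hpne : 1 - pcoef n a k ≠ 0 := by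
      intro h
      have hmf0 : muFactor n a k = 0 := by
        unfold muFactor
        rw [if_neg (by rintro ⟨h1', _⟩; exact hane h1'), h, div_zero]
      have : a (k+2) = 0 := by rw [h2, hmu, hmf0]; ring
      exact (hapos (k+2)).ne' this
    have hmf : muFactor n a k = a (k+1) ^ n / (1 - pcoef n a k) := by
      unfold muFactor
      rw [if_neg (by rintro ⟨h1', _⟩; exact hane h1')]
    have hmuk : mu n a k = a (k+1) / (lam * a k ^ n) := by
      rw [h1]; field_simp [hlam0.ne', (pow_pos (hapos k) n).ne']
    rw [h2, hmu, hmuk, hmf]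
    field_simp [hlam0.ne', (pow_pos (hapos k) n).ne', hpne]
    ring
  have hp0 : ∀ k, 0 ≤ pcoef n a k := by
    intro k
    have h1 := haD.2.1 k
    have h2 : (0:ℝ) ≤ (n:ℝ) := by positivity
    have h3 : (0:ℝ) ≤ a (k+1) ^ (n-1) := pow_nonneg (hapos _).le _
    unfold pcoef
    apply mul_nonneg (mul_nonneg h2 (by linarith)) h3
  have hplt : ∀ k, 0 < 1 - pcoef n a k := by
    intro k
    have hk := key k
    have h1 : 0 < a (k+1) ^ (2*n+1) := pow_pos (hapos _) _
    have h2 : 0 < a (k+2) := hapos _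
    have h3 : 0 < a k ^ n := pow_pos (hapos _) _
    nlinarith [mul_pos h2 h3]
  -- log variables
  set b : ℕ → ℝ := fun k => -Real.log (a k) with hbdef
  have hbnn : ∀ k, 0 ≤ b k := by
    intro k
    simp only [hbdef, neg_nonneg]
    exact Real.log_nonpos (hapos k).le (haD.2.2.1 k).2
  have hb0 : b 0 = 0 := by simp [hbdef, ha0]
  set e : ℕ → ℝ := fun k => b (k+1) - alpha * b k with hedef
  have he0 : e 0 = -Real.log lam := by
    have h1 : a 1 = lam := by
      have h := harec 0
      simp [mu, ha0] at h
      simpa using h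
    show b 1 - alpha * b 0 = -Real.log lam
    rw [hb0]
    show -Real.log (a 1) - alpha * 0 = -Real.log lam
    rw [h1]; ring
  have hloglam : 0 ≤ -Real.log lam := by
    rw [neg_nonneg]
    exact Real.log_nonpos hlam0.le hlam1.le
  -- recurrence for e
  have erec : ∀ k, e (k+1) = β * e k + Real.log (1 - pcoef n a k) := by
    intro k
    have hlog := congrArg Real.log (key k)
    rw [Real.log_mul (hapos _).ne' (mul_pos (pow_pos (hapos k) n) (hplt k)).ne',
        Real.log_mul (pow_ne_zero _ (hapos k).ne') (hplt k).ne',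
        Real.log_pow, Real.log_pow] at hlog
    have hb2 : b (k+2) = (2*(n:ℝ)+1) * b (k+1) - (n:ℝ) * b k
        + Real.log (1 - pcoef n a k) := by
      show -Real.log (a (k+2)) = (2*(n:ℝ)+1) * (-Real.log (a (k+1)))
        - (n:ℝ) * (-Real.log (a k)) + Real.log (1 - pcoef n a k)
      push_cast at hlog
      linarith [hlog]
    show b (k+2) - alpha * b (k+1) = β * (b (k+1) - alpha * b k) + _
    rw [hb2]
    linear_combination (b k) * hαβ + (b (k+1)) * hβdef
  have hlognp : ∀ k, Real.log (1 - pcoef n a k) ≤ 0 := by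
    intro k
    exact Real.log_nonpos (hplt k).le (by linarith [hp0 k])
  -- upper bound on e
  have eub : ∀ k, e k ≤ -Real.log lam := by
    intro k
    induction k with
    | zero => rw [he0]
    | succ k ih =>
      rw [erec k]
      nlinarith [hlognp k, hβpos, hβle]
  -- ε and lower bound on e
  set ε : ℕ → ℝ := fun j => -Real.log (1 - pcoef n a j) with hεdef
  have hεnn : ∀ j, 0 ≤ ε j := fun j => by
    simp only [hεdef, neg_nonneg]; exact hlognp j
  have elb : ∀ k, -(∑ j ∈ Finset.range k, ε j) ≤ e k := by
    intro k
    induction k with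
    | zero => simp [he0, hloglam]
    | succ k ih =>
      have hS : 0 ≤ ∑ j ∈ Finset.range k, ε j :=
        Finset.sum_nonneg fun j _ => hεnn j
      have h1 : 0 ≤ β * (e k + ∑ j ∈ Finset.range k, ε j) :=
        mul_nonneg hβpos.le (by linarith)
      have h2 : 0 ≤ (1 - β) * (∑ j ∈ Finset.range k, ε j) :=
        mul_nonneg (by linarith) hS
      rw [erec k, Finset.sum_range_succ]
      have h3 : ε k = -Real.log (1 - pcoef n a k) := rfl
      rw [h3]
      nlinarith
  -- smallness of p far out
  have htend : Filter.Tendsto a Filter.atTop (nhds 0) := by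
    have h := haD.2.2.2.tendsto_atTop_zero
    exact (Filter.tendsto_add_atTop_iff_nat 1).mp h
  obtain ⟨K, hK⟩ : ∃ K, ∀ j, K ≤ j → a j ≤ 1/(2*(n:ℝ)) := by
    have h : ∀ᶠ j in Filter.atTop, a j < 1/(2*(n:ℝ)) :=
      htend.eventually_lt_const (by positivity)
    obtain ⟨K, hK⟩ := Filter.eventually_atTop.mp h
    exact ⟨K, fun j hj => (hK j hj).le⟩
  have hpbound : ∀ j, pcoef n a j ≤ (n:ℝ) * (a j - a (j+1)) := by
    intro j
    have h1 : a (j+1) ^ (n-1) ≤ 1 :=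
      pow_le_one₀ (hapos (j+1)).le (haD.2.2.1 (j+1)).2
    have h2 : 0 ≤ (n:ℝ) * (a j - a (j+1)) :=
      mul_nonneg (by positivity) (by linarith [haD.2.1 j])
    unfold pcoef
    calc (n:ℝ) * (a j - a (j+1)) * a (j+1) ^ (n-1)
        ≤ (n:ℝ) * (a j - a (j+1)) * 1 := mul_le_mul_of_nonneg_left h1 h2
      _ = (n:ℝ) * (a j - a (j+1)) := mul_one _
  have hphalf : ∀ j, K ≤ j → pcoef n a j ≤ 1/2 := by
    intro j hj
    have h1 := hpbound j
    have h2 := hK j hj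
    have h3 := (hapos (j+1)).le
    have hnpos : (0:ℝ) < n := by linarith
    have h4 : (n:ℝ) * (a j - a (j+1)) ≤ (n:ℝ) * a j :=
      mul_le_mul_of_nonneg_left (by linarith) hnpos.le
    have h5 : (n:ℝ) * a j ≤ (n:ℝ) * (1/(2*(n:ℝ))) :=
      mul_le_mul_of_nonneg_left h2 hnpos.le
    have h6 : (n:ℝ) * (1/(2*(n:ℝ))) = 1/2 := by field_simp
    linarith
  have hεsmall : ∀ j, K ≤ j → ε j ≤ 2 * ((n:ℝ) * (a j - a (j+1))) := by
    intro j hj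
    have hp1 := hplt j
    have hp2 := hp0 j
    have hp3 := hphalf j hj
    have hlog2 : Real.log (1 - pcoef n a j)⁻¹ ≤ (1 - pcoef n a j)⁻¹ - 1 :=
      Real.log_le_sub_one_of_pos (by positivity)
    rw [Real.log_inv] at hlog2
    have hinv : (1 - pcoef n a j)⁻¹ ≤ 1 + 2 * pcoef n a j := by
      rw [inv_le_iff_one_le_mul₀ hp1]
      nlinarith [mul_nonneg hp2 (by linarith : (0:ℝ) ≤ 1 - 2 * pcoef n a j)]
    have h7 : ε j ≤ 2 * pcoef n a j := by
      show -Real.log (1 - pcoef n a j) ≤ 2 * pcoef n a j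
      linarith
    linarith [hpbound j]
  -- uniform bound on sums of ε
  set SK : ℝ := ∑ j ∈ Finset.range K, ε j with hSK
  have hSKnn : 0 ≤ SK := Finset.sum_nonneg fun j _ => hεnn j
  have hsum_bound : ∀ k, ∑ j ∈ Finset.range k, ε j ≤ SK + 1 := by
    intro k
    rcases le_or_gt k K with h | h
    · have h1 : ∑ j ∈ Finset.range k, ε j ≤ SK := by
        rw [hSK]
        exact Finset.sum_le_sum_of_subset_of_nonneg
          (Finset.range_subset_range.mpr h) (fun j _ _ => hεnn j)
      linarith
    · have hsplit : ∑ j ∈ Finset.range k, ε j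
          = SK + ∑ j ∈ Finset.Ico K k, ε j := by
        rw [hSK, Finset.range_eq_Ico]
        exact (by rw [Finset.range_eq_Ico]; exact (Finset.sum_Ico_consecutive ε (Nat.zero_le K) h.le).symm)
      have htail : ∑ j ∈ Finset.Ico K k, ε j
          ≤ ∑ j ∈ Finset.Ico K k, 2 * ((n:ℝ) * (a j - a (j+1))) :=
        Finset.sum_le_sum fun j hj => hεsmall j (Finset.mem_Ico.mp hj).1
      have htel : ∑ j ∈ Finset.Ico K k, (a j - a (j+1)) = a K - a k := by
        rw [Finset.sum_Ico_eq_sum_range]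
        have h0 := Finset.sum_range_sub' (fun i => a (K + i)) (k - K)
        simp only [Nat.add_zero] at h0
        rw [Nat.add_sub_cancel' h.le] at h0
        rw [← h0]
        apply Finset.sum_congr rfl
        intro i _
        have : K + i + 1 = K + (i + 1) := by omega
        rw [this]
      have htail2 : ∑ j ∈ Finset.Ico K k, 2 * ((n:ℝ) * (a j - a (j+1)))
          = 2 * (n:ℝ) * (a K - a k) := by
        calc ∑ j ∈ Finset.Ico K k, 2 * ((n:ℝ) * (a j - a (j+1)))
            = ∑ j ∈ Finset.Ico K k, (2 * (n:ℝ)) * (a j - a (j+1)) :=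
              Finset.sum_congr rfl (fun j _ => by ring)
          _ = (2 * (n:ℝ)) * ∑ j ∈ Finset.Ico K k, (a j - a (j+1)) :=
              (Finset.mul_sum _ _ _).symm
          _ = 2 * (n:ℝ) * (a K - a k) := by rw [htel]
      have hKk : a K ≤ 1/(2*(n:ℝ)) := hK K le_rfl
      have hak : 0 < a k := hapos k
      have hnpos : (0:ℝ) < n := by linarith
      have : 2 * (n:ℝ) * (a K - a k) ≤ 1 := by
        have : 2 * (n:ℝ) * (a K - a k) ≤ 2 * (n:ℝ) * a K := by nlinarith
        have h9 : 2 * (n:ℝ) * a K ≤ 2 * (n:ℝ) * (1/(2*(n:ℝ))) := by nlinarith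
        have h10 : 2 * (n:ℝ) * (1/(2*(n:ℝ))) = 1 := by field_simp
        linarith
      rw [hsplit]
      rw [htail2] at htail
      linarith
  -- conclusion
  set M : ℝ := -Real.log lam + (SK + 1) with hM
  have hMnn : 0 ≤ M := by rw [hM]; linarith
  refine ⟨Real.exp M, Real.one_le_exp hMnn, fun k => ?_⟩
  have heub : e k ≤ M := by
    have := eub k
    rw [hM]; linarith
  have helb : -M ≤ e k := by
    have h1 := elb k
    have h2 := hsum_bound k
    rw [hM]; linarith
  have hrw1 : a (k+1) = Real.exp (-(b (k+1))) := by
    show a (k+1) = Real.exp (-(-Real.log (a (k+1))))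
    rw [neg_neg, Real.exp_log (hapos _)]
  have hrw2 : a k ^ alpha = Real.exp (-(alpha * b k)) := by
    rw [Real.rpow_def_of_pos (hapos k)]
    congr 1
    show Real.log (a k) * alpha = -(alpha * -Real.log (a k))
    ring
  constructor
  · rw [hrw1, hrw2, ← Real.exp_neg, ← Real.exp_add, Real.exp_le_exp]
    show -M + -(alpha * b k) ≤ -(b (k+1))
    have : e k = b (k+1) - alpha * b k := rfl
    linarith
  · rw [hrw1, hrw2, ← Real.exp_add, Real.exp_le_exp]
    show -(b (k+1)) ≤ M + -(alpha * b k)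
    have : e k = b (k+1) - alpha * b k := rfl
    linarith


end
end

section
/- For every k ≥ 1, 0 < a_k ≤ λ^{1 + n + n² + ⋯ + n^{k−1}}; in particular a_k → 0 as k → ∞. -/
open Filter

noncomputable section

/-- Key inequality: for `x ∈ [0,1]`, `n (1 - x) x^(n-1) ≤ 1 - x^n`. -/
lemma geom_aux (n : ℕ) (x : ℝ) (hx0 : 0 ≤ x) (hx1 : x ≤ 1) :
    (n : ℝ) * (1 - x) * x ^ (n - 1) ≤ 1 - x ^ n := by
  have h1 : (1 - x) * (∑ i ∈ Finset.range n, x ^ i) = 1 - x ^ n := by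
    have h := geom_sum_mul x n
    nlinarith [h]
  have h2 : (n : ℝ) * x ^ (n - 1) ≤ ∑ i ∈ Finset.range n, x ^ i := by
    calc (n : ℝ) * x ^ (n - 1) = ∑ _i ∈ Finset.range n, x ^ (n - 1) := by
          simp [Finset.sum_const, nsmul_eq_mul]
      _ ≤ ∑ i ∈ Finset.range n, x ^ i :=
          Finset.sum_le_sum fun i hi =>
            pow_le_pow_of_le_one hx0 hx1 (Nat.le_sub_one_of_lt (Finset.mem_range.mp hi))
  calc (n : ℝ) * (1 - x) * x ^ (n - 1) = (1 - x) * ((n : ℝ) * x ^ (n - 1)) := by ring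
    _ ≤ (1 - x) * (∑ i ∈ Finset.range n, x ^ i) :=
        mul_le_mul_of_nonneg_left h2 (by linarith)
    _ = 1 - x ^ n := h1

/-- for k ≥ 1, 0 < a_k ≤ λ^(1 + n + ⋯ + n^(k-1)); in particular a_k → 0. -/
theorem stmt7 (lam : ℝ) (hlam0 : 0 < lam) (hlam1 : lam < 1) (n : ℕ) (hn : 1 ≤ n)
    (a : ℕ → ℝ) (ha0 : a 0 = 1)
    (harec : ∀ k, a (k + 1) = lam * a k ^ n * mu n a k)
    (hmu : ∀ k, mu n a k ≤ 1) :
    (∀ k : ℕ, 1 ≤ k → 0 < a k ∧ a k ≤ lam ^ (∑ i ∈ Finset.range k, n ^ i)) ∧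
      Tendsto a atTop (nhds 0) := by
  have main : ∀ k, 0 < a k ∧ a k ≤ 1 ∧ 0 < mu n a k := by
    intro k
    induction k with
    | zero => refine ⟨by rw [ha0]; norm_num, by rw [ha0], ?_⟩; simp [mu]
    | succ k ih =>
      obtain ⟨hak, hak1, hmuk⟩ := ih
      have hpos : 0 < a (k + 1) := by
        rw [harec]; exact mul_pos (mul_pos hlam0 (pow_pos hak n)) hmuk
      have hle : a (k + 1) ≤ 1 := by
        rw [harec]
        have h1 : lam * a k ^ n * mu n a k ≤ lam * a k ^ n * 1 :=
          mul_le_mul_of_nonneg_left (hmu k) (by positivity)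
        have h2 : a k ^ n ≤ 1 := pow_le_one₀ hak.le hak1
        nlinarith
      refine ⟨hpos, hle, ?_⟩
      have hg := geom_aux n (a (k + 1)) hpos.le hle
      have hp : pcoef n a k ≤ 1 - a (k + 1) ^ n := by
        have hxnn : (0:ℝ) ≤ (n : ℝ) * a (k + 1) ^ (n - 1) := by positivity
        have : pcoef n a k ≤ (n : ℝ) * (1 - a (k + 1)) * a (k + 1) ^ (n - 1) := by
          unfold pcoef; nlinarith
        linarith
      have h1p : 0 < 1 - pcoef n a k := by nlinarith [pow_pos hpos n]
      have hmf : 0 < muFactor n a k := by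
        rw [muFactor, if_neg]
        · exact div_pos (pow_pos hpos n) h1p
        · rintro ⟨h, -⟩; exact absurd h (pow_pos hpos n).ne'
      rw [mu, Finset.prod_range_succ]
      exact mul_pos hmuk hmf
  have hub : ∀ k : ℕ, 1 ≤ k → a k ≤ lam ^ (∑ i ∈ Finset.range k, n ^ i) := by
    intro k hk
    induction k with
    | zero => omega
    | succ k ih =>
      by_cases hk0 : k = 0
      · subst hk0
        simp [harec, ha0, mu]
      · have hIH := ih (Nat.one_le_iff_ne_zero.mpr hk0)
        have h1 : a (k + 1) ≤ lam * a k ^ n := by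
          rw [harec]
          have := mul_le_mul_of_nonneg_left (hmu k) (show (0:ℝ) ≤ lam * a k ^ n by
            have := (main k).1; positivity)
          linarith [this]
        have h2 : a k ^ n ≤ (lam ^ (∑ i ∈ Finset.range k, n ^ i)) ^ n :=
          pow_le_pow_left₀ (main k).1.le hIH n
        have hS : ∑ i ∈ Finset.range (k + 1), n ^ i
            = (∑ i ∈ Finset.range k, n ^ i) * n + 1 := by
          rw [Finset.sum_range_succ']
          simp [pow_succ, Finset.sum_mul]
        calc a (k + 1) ≤ lam * (lam ^ (∑ i ∈ Finset.range k, n ^ i)) ^ n := by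
              nlinarith [h1, h2, hlam0]
          _ = lam ^ (∑ i ∈ Finset.range (k + 1), n ^ i) := by
              rw [hS, ← pow_mul, pow_succ]; ring
  refine ⟨fun k hk => ⟨(main k).1, hub k hk⟩, ?_⟩
  have hlamk : Tendsto (fun k : ℕ => lam ^ k) atTop (nhds 0) :=
    tendsto_pow_atTop_nhds_zero_of_lt_one hlam0.le hlam1
  apply tendsto_of_tendsto_of_tendsto_of_le_of_le' tendsto_const_nhds hlamk
  · exact Eventually.of_forall fun k => (main k).1.le
  · filter_upwards [eventually_ge_atTop 1] with k hk
    refine le_trans (hub k hk) (pow_le_pow_of_le_one hlam0.le hlam1.le ?_)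
    calc k = ∑ _i ∈ Finset.range k, 1 := by simp
      _ ≤ ∑ i ∈ Finset.range k, n ^ i :=
        Finset.sum_le_sum fun i _ => Nat.one_le_pow i n (by omega)

end
end

section
/- If z, z′ ∈ D satisfy z_k ≤ z′_k for all k ≥ 1, then μ(z,k) ≤ μ(z′,k) for all k ≥ 0. -/
open Filter

noncomputable section

lemma key_core (n : ℕ) {b c : ℝ} (hb : 0 ≤ b) (hbc : b ≤ c) :
    (n : ℝ) * b ^ (n - 1) * (c - b) ≤ c ^ n - b ^ n := by
  rw [← geom_sum₂_mul]
  apply mul_le_mul_of_nonneg_right _ (by linarith)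
  calc (n : ℝ) * b ^ (n - 1) = ∑ _i ∈ Finset.range n, b ^ (n - 1) := by
        rw [Finset.sum_const, Finset.card_range, nsmul_eq_mul]
    _ ≤ ∑ i ∈ Finset.range n, c ^ i * b ^ (n - 1 - i) := by
        apply Finset.sum_le_sum
        intro i hi
        rw [Finset.mem_range] at hi
        have h : b ^ (n - 1) = b ^ i * b ^ (n - 1 - i) := by
          rw [← pow_add]; congr 1; omega
        rw [h]
        exact mul_le_mul_of_nonneg_right (pow_le_pow_left₀ hb hbc i) (pow_nonneg hb _)

/-- Lower bound on the denominator: `b^n ≤ 1 - n (a - b) b^(n-1)`. -/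
lemma denom_ge (n : ℕ) {a b : ℝ} (hb : 0 ≤ b) (hba : b ≤ a) (ha : a ≤ 1) :
    b ^ n ≤ 1 - (n : ℝ) * (a - b) * b ^ (n - 1) := by
  have h1 := key_core n hb hba
  have h2 : a ^ n ≤ 1 := pow_le_one₀ (le_trans hb hba) ha
  nlinarith

lemma muFactor_nonneg (n : ℕ) {z : ℕ → ℝ} (j : ℕ)
    (hb : 0 ≤ z (j + 1)) (hba : z (j + 1) ≤ z j) (ha : z j ≤ 1) :
    0 ≤ muFactor n z j := by
  have hd := denom_ge n hb hba ha
  rw [muFactor, pcoef]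
  split_ifs with h
  · exact zero_le_one
  · exact div_nonneg (pow_nonneg hb n) (by nlinarith [pow_nonneg hb n])

lemma muFactor_mono (n : ℕ) (hn : 1 ≤ n) {z z' : ℕ → ℝ} (j : ℕ)
    (hb : 0 ≤ z (j + 1)) (hba : z (j + 1) ≤ z j) (ha : z j ≤ 1)
    (hb' : 0 ≤ z' (j + 1)) (hba' : z' (j + 1) ≤ z' j) (ha' : z' j ≤ 1)
    (haa : z j ≤ z' j) (hbb : z (j + 1) ≤ z' (j + 1)) :
    muFactor n z j ≤ muFactor n z' j := by
  set a := z j with hadef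
  set b := z (j + 1) with hbdef
  set a' := z' j with hadef'
  set b' := z' (j + 1) with hbdef'
  have hdge : b ^ n ≤ 1 - (n : ℝ) * (a - b) * b ^ (n - 1) := denom_ge n hb hba ha
  have hdge' : b' ^ n ≤ 1 - (n : ℝ) * (a' - b') * b' ^ (n - 1) := denom_ge n hb' hba' ha'
  have hbn : 0 ≤ b ^ n := pow_nonneg hb n
  have hbn' : 0 ≤ b' ^ n := pow_nonneg hb' n
  rw [muFactor, muFactor, pcoef, pcoef, ← hadef, ← hbdef, ← hadef', ← hbdef']
  by_cases hdeg' : b' ^ n = 0 ∧ 1 - (n : ℝ) * (a' - b') * b' ^ (n - 1) = 0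
  · -- RHS is the degenerate factor 1
    rw [if_pos hdeg']
    have hb0 : b = 0 := le_antisymm (hbb.trans_eq (by
      have := pow_eq_zero_iff (n := n) (by omega) |>.mp hdeg'.1
      exact this)) hb
    split_ifs with h
    · exact le_refl 1
    · rw [hb0, zero_pow (by omega), zero_div]; exact zero_le_one
  · rw [if_neg hdeg']
    have hd'pos : 0 < 1 - (n : ℝ) * (a' - b') * b' ^ (n - 1) := by
      rcases lt_or_eq_of_le (hbn'.trans hdge') with h | h
      · exact h
      · exact absurd ⟨by nlinarith, h.symm⟩ hdeg'
    by_cases hdeg : b ^ n = 0 ∧ 1 - (n : ℝ) * (a - b) * b ^ (n - 1) = 0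
    · -- LHS degenerate: forces n = 1, a = 1, hence a' = 1 and RHS = 1
      rw [if_pos hdeg]
      have hb0 : b = 0 := pow_eq_zero_iff (n := n) (by omega) |>.mp hdeg.1
      have hn1 : n = 1 := by
        by_contra hne
        have h2 : 2 ≤ n := by omega
        have : b ^ (n - 1) = 0 := by rw [hb0]; exact zero_pow (by omega)
        rw [this] at hdeg
        simp at hdeg
      subst hn1
      have ha1 : a = 1 := by
        have := hdeg.2
        simp [hb0] at this
        linarith
      have ha'1 : a' = 1 := le_antisymm ha' (ha1 ▸ haa)
      have hbpos' : 0 < b' := by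
        have := hd'pos
        rw [ha'1] at this
        simpa using this
      rw [ha'1]
      simp only [pow_one, Nat.cast_one, Nat.sub_self, pow_zero, mul_one, one_mul]
      rw [show (1 : ℝ) - (1 - b') = b' by ring, div_self (ne_of_gt hbpos')]
    · rw [if_neg hdeg]
      have hdpos : 0 < 1 - (n : ℝ) * (a - b) * b ^ (n - 1) := by
        rcases lt_or_eq_of_le (hbn.trans hdge) with h | h
        · exact h
        · exact absurd ⟨by nlinarith, h.symm⟩ hdeg
      rw [div_le_div_iff₀ hdpos hd'pos]
      -- main inequality
      have hBn : b ^ n = b * b ^ (n - 1) := by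
        rw [← pow_succ']; congr 1; omega
      have hBn' : b' ^ n = b' * b' ^ (n - 1) := by
        rw [← pow_succ']; congr 1; omega
      have hkey := key_core n hb hbb
      rw [hBn, hBn'] at hkey ⊢
      have hB1 : 0 ≤ b ^ (n - 1) := pow_nonneg hb _
      have hC1 : 0 ≤ b' ^ (n - 1) := pow_nonneg hb' _
      have hC1le : b' ^ (n - 1) ≤ 1 := pow_le_one₀ hb' (hba'.trans ha')
      have ha0 : 0 ≤ a := hb.trans hba
      have hslack : 0 ≤ (1 - a * b' ^ (n - 1)) * ((n : ℝ) * b ^ (n - 1) * (b' - b)) := by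
        apply mul_nonneg
        · nlinarith
        · apply mul_nonneg (mul_nonneg (Nat.cast_nonneg n) hB1) (by linarith)
      have hada : 0 ≤ b * b ^ (n - 1) * ((n : ℝ) * (a' - a) * b' ^ (n - 1)) := by
        apply mul_nonneg (mul_nonneg hb hB1)
        apply mul_nonneg (mul_nonneg (Nat.cast_nonneg n) (by linarith)) hC1
      nlinarith [hslack, hkey, hada]

/-- if z, z' ∈ D with z_k ≤ z'_k for all k ≥ 1, then μ(z,k) ≤ μ(z',k). -/
theorem stmt9 (lam : ℝ) (hlam0 : 0 < lam) (hlam1 : lam < 1) (n : ℕ) (hn : 1 ≤ n)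
    (z z' : ℕ → ℝ) (hz : memD z) (hz' : memD z')
    (hle : ∀ k, 1 ≤ k → z k ≤ z' k) :
    ∀ k : ℕ, mu n z k ≤ mu n z' k := by
  obtain ⟨hz0, hzdec, hzb, -⟩ := hz
  obtain ⟨hz0', hzdec', hzb', -⟩ := hz'
  have hle' : ∀ k, z k ≤ z' k := by
    intro k
    cases k with
    | zero => rw [hz0, hz0']
    | succ m => exact hle (m + 1) (by omega)
  intro k
  unfold mu
  apply Finset.prod_le_prod
  · intro j _
    exact muFactor_nonneg n j (hzb (j + 1)).1 (hzdec j) (hzb j).2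
  · intro j _
    exact muFactor_mono n hn j (hzb (j + 1)).1 (hzdec j) (hzb j).2
      (hzb' (j + 1)).1 (hzdec' j) (hzb' j).2 (hle' j) (hle' (j + 1))

end
end

section
/- Let z be a non-increasing sequence with values in [0,1] (with z_0 = 1) such that z_1 ≤ (1+λ)/2 and z_k ≤ 2 a_k for all k ≥ 1. Then μ(z,k) ≤ ρ^k μ(a,k) for all k ≥ 0. -/
open Filter

noncomputable section

lemma convex_pow (m : ℕ) (A B : ℝ) (hB : 0 ≤ B) (hAB : B ≤ A) :
    ((m + 1 : ℕ) : ℝ) * (A - B) * B ^ m ≤ A ^ (m + 1) - B ^ (m + 1) := by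
  induction m with
  | zero => simp
  | succ m ih =>
    have hA : 0 ≤ A := hB.trans hAB
    have h1 : A * (((m + 1 : ℕ) : ℝ) * (A - B) * B ^ m) ≤ A * (A ^ (m + 1) - B ^ (m + 1)) :=
      mul_le_mul_of_nonneg_left ih hA
    have h3 : (((m + 1 : ℕ) : ℝ) * (A - B) * B ^ m) * B ≤ (((m + 1 : ℕ) : ℝ) * (A - B) * B ^ m) * A := by
      apply mul_le_mul_of_nonneg_left hAB
      have : 0 ≤ A - B := by linarith
      positivity
    push_cast at h1 h3 ⊢
    simp only [pow_succ] at h1 h3 ⊢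
    ring_nf at h1 h3 ⊢
    linarith

lemma convex_pow' (n : ℕ) (hn : 1 ≤ n) (A B : ℝ) (hB : 0 ≤ B) (hAB : B ≤ A) :
    (n : ℝ) * (A - B) * B ^ (n - 1) ≤ A ^ n - B ^ n := by
  obtain ⟨m, rfl⟩ := Nat.exists_eq_add_of_le hn
  have h := convex_pow m A B hB hAB
  have e : 1 + m - 1 = m := by omega
  rw [e]
  have e2 : (1 + m) = m + 1 := by omega
  rw [e2]
  exact h

lemma factor_bounds (n : ℕ) (hn : 1 ≤ n) (a : ℕ → ℝ) (j : ℕ)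
    (h0 : 0 < a (j + 1)) (h1 : a (j + 1) ≤ a j) (h2 : a j ≤ 1) :
    0 < muFactor n a j ∧ muFactor n a j ≤ a j ^ n ∧ a (j + 1) ^ n ≤ muFactor n a j := by
  have hAj : 0 < a j := lt_of_lt_of_le h0 h1
  have hp0 : 0 ≤ pcoef n a j := by
    unfold pcoef
    exact mul_nonneg (mul_nonneg (by positivity) (by linarith)) (pow_nonneg h0.le _)
  have hcx : pcoef n a j ≤ a j ^ n - a (j + 1) ^ n :=
    convex_pow' n hn (a j) (a (j + 1)) h0.le h1
  have hpow : 0 < a (j + 1) ^ n := pow_pos h0 n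
  have hajn : a j ^ n ≤ 1 := pow_le_one₀ hAj.le h2
  have hd : 0 < 1 - pcoef n a j := by nlinarith
  have hne : ¬ (a (j + 1) ^ n = 0 ∧ 1 - pcoef n a j = 0) := by
    rintro ⟨h, -⟩; exact hpow.ne' h
  rw [muFactor, if_neg hne]
  refine ⟨div_pos hpow hd, ?_, ?_⟩
  · rw [div_le_iff₀ hd]; nlinarith
  · rw [le_div_iff₀ hd]; nlinarith

lemma a_facts (lam : ℝ) (hlam0 : 0 < lam) (hlam1 : lam < 1) (n : ℕ) (hn : 1 ≤ n)
    (a : ℕ → ℝ) (ha0 : a 0 = 1)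
    (harec : ∀ k, a (k + 1) = lam * a k ^ n * mu n a k) :
    ∀ k, (∀ j, j ≤ k → 0 < a j ∧ a j ≤ 1) ∧ (∀ j, j < k → a (j + 1) ≤ a j) := by
  intro k
  induction k with
  | zero =>
    refine ⟨?_, by omega⟩
    intro j hj
    interval_cases j
    exact ⟨by rw [ha0]; norm_num, le_of_eq ha0⟩
  | succ k ih =>
    obtain ⟨ihb, ihm⟩ := ih
    have hfb : ∀ j, j < k → 0 < muFactor n a j ∧ muFactor n a j ≤ a j ^ n ∧ a (j+1) ^ n ≤ muFactor n a j :=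
      fun j hj => factor_bounds n hn a j (ihb (j + 1) hj).1 (ihm j hj) (ihb j hj.le).2
    have hmu1 : 0 < mu n a k := by
      apply Finset.prod_pos
      intro j hj
      exact (hfb j (Finset.mem_range.mp hj)).1
    have hmu2 : mu n a k ≤ 1 := by
      apply Finset.prod_le_one
      · intro j hj; exact (hfb j (Finset.mem_range.mp hj)).1.le
      · intro j hj
        refine le_trans (hfb j (Finset.mem_range.mp hj)).2.1 (pow_le_one₀ ?_ ?_)
        · exact (ihb j (Finset.mem_range.mp hj).le).1.le
        · exact (ihb j (Finset.mem_range.mp hj).le).2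
    have hak := ihb k le_rfl
    have hakn : 0 < a k ^ n := pow_pos hak.1 n
    have hk1 : 0 < a (k + 1) := by
      rw [harec k]; exact mul_pos (mul_pos hlam0 hakn) hmu1
    have haknle : a k ^ n ≤ a k := by
      calc a k ^ n ≤ a k ^ 1 := pow_le_pow_of_le_one hak.1.le hak.2 hn
      _ = a k := pow_one _
    have hk2 : a (k + 1) ≤ a k := by
      rw [harec k]
      have s1 : lam * a k ^ n * (mu n a k) ≤ lam * a k ^ n * 1 :=
        mul_le_mul_of_nonneg_left hmu2 (mul_pos hlam0 hakn).le
      have s2 : lam * a k ^ n ≤ a k ^ n := by nlinarith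
      nlinarith
    constructor
    · intro j hj
      rcases eq_or_lt_of_le hj with h | h
      · subst h; exact ⟨hk1, le_trans hk2 hak.2⟩
      · exact ihb j (Nat.lt_succ_iff.mp h)
    · intro j hj
      rcases Nat.lt_succ_iff_lt_or_eq.mp hj with h | h
      · exact ihm j h
      · rw [h]; exact hk2

lemma exp_half_sq : Real.exp (1/2) ^ 2 = Real.exp 1 := by
  rw [← Real.exp_nat_mul]; norm_num

lemma exp_half_le_two : Real.exp (1/2) ≤ 2 := by
  nlinarith [exp_half_sq, Real.exp_one_lt_d9, Real.exp_pos (1/2 : ℝ)]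

lemma exp_half_ge : (3:ℝ)/2 ≤ Real.exp (1/2) := by
  nlinarith [exp_half_sq, Real.exp_one_gt_d9, Real.exp_pos (1/2 : ℝ)]

lemma half_le_exp_neg_half : (1:ℝ)/2 ≤ Real.exp (-(1/2)) := by
  rw [Real.exp_neg, ← one_div]
  exact le_trans (by norm_num) (one_div_le_one_div_of_le (Real.exp_pos _) exp_half_le_two)

lemma pbound (n : ℕ) (hn : 2 ≤ n) (x : ℝ) (hx0 : 0 ≤ x) (hx1 : x ≤ 1) :
    (n : ℝ) * (1 - x) * x ^ (n - 1) ≤ Real.exp (-(1/2)) := by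
  rcases eq_or_lt_of_le hn with h2 | h3
  · -- n = 2
    subst h2
    have : (2:ℝ) * (1 - x) * x ^ 1 ≤ 1/2 := by nlinarith [sq_nonneg (2*x - 1)]
    calc ((2:ℕ):ℝ) * (1 - x) * x ^ (2-1) ≤ 1/2 := by push_cast; simpa using this
    _ ≤ Real.exp (-(1/2)) := half_le_exp_neg_half
  · -- n ≥ 3
    have hm : 2 ≤ n - 1 := by omega
    set m := n - 1 with hmdef
    have hnm : n = m + 1 := by omega
    have hmR : (2:ℝ) ≤ (m:ℝ) := by exact_mod_cast hm
    have hx' : x ≤ Real.exp (x - 1) := by linarith [Real.add_one_le_exp (x - 1)]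
    have h1 : x ^ m ≤ Real.exp (x - 1) ^ m := pow_le_pow_left₀ hx0 hx' m
    have h2 : Real.exp (x - 1) ^ m = Real.exp ((m:ℝ) * (x - 1)) := (Real.exp_nat_mul _ m).symm
    set u : ℝ := (m:ℝ) * (1 - x) with hu
    have hu0 : 0 ≤ u := mul_nonneg (by linarith) (by linarith)
    have he : Real.exp ((m:ℝ) * (x - 1)) = Real.exp (-u) := by rw [hu]; ring_nf
    have hkey : u * Real.exp (-u) ≤ Real.exp (-1) := by
      have hb : u ≤ Real.exp (u - 1) := by linarith [Real.add_one_le_exp (u - 1)]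
      calc u * Real.exp (-u) ≤ Real.exp (u - 1) * Real.exp (-u) :=
            mul_le_mul_of_nonneg_right hb (Real.exp_pos _).le
      _ = Real.exp (-1) := by rw [← Real.exp_add]; ring_nf
    -- (n:ℝ)*(1-x)*x^m ≤ (n/m) * (u * exp(-u))
    have hnR : (n:ℝ) = (m:ℝ) + 1 := by rw [hnm]; push_cast; ring
    have step1 : (n : ℝ) * (1 - x) * x ^ m ≤ (n : ℝ) * (1 - x) * Real.exp (-u) := by
      apply mul_le_mul_of_nonneg_left _ (by nlinarith : (0:ℝ) ≤ (n:ℝ) * (1 - x))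
      rw [← he, ← h2]; exact h1
    have step2 : (n : ℝ) * (1 - x) * Real.exp (-u) = ((m:ℝ) + 1)/(m:ℝ) * (u * Real.exp (-u)) := by
      rw [hnR, hu]; field_simp
    have step3 : ((m:ℝ) + 1)/(m:ℝ) * (u * Real.exp (-u)) ≤ ((m:ℝ) + 1)/(m:ℝ) * Real.exp (-1) :=
      mul_le_mul_of_nonneg_left hkey (by positivity)
    have step4 : ((m:ℝ) + 1)/(m:ℝ) * Real.exp (-1) ≤ (3/2) * Real.exp (-1) := by
      apply mul_le_mul_of_nonneg_right _ (Real.exp_pos _).le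
      rw [div_le_iff₀ (by linarith)]; linarith
    have step5 : (3/2 : ℝ) * Real.exp (-1) ≤ Real.exp (-(1/2)) := by
      have e : Real.exp (-(1/2)) = Real.exp (-1) * Real.exp (1/2) := by
        rw [← Real.exp_add]; norm_num
      rw [e]
      nlinarith [Real.exp_pos (-1 : ℝ), exp_half_ge]
    calc (n : ℝ) * (1 - x) * x ^ (n-1) = (n : ℝ) * (1 - x) * x ^ m := by rw [← hmdef]
    _ ≤ (n : ℝ) * (1 - x) * Real.exp (-u) := step1
    _ = ((m:ℝ) + 1)/(m:ℝ) * (u * Real.exp (-u)) := step2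
    _ ≤ ((m:ℝ) + 1)/(m:ℝ) * Real.exp (-1) := step3
    _ ≤ (3/2) * Real.exp (-1) := step4
    _ ≤ Real.exp (-(1/2)) := step5

/-- if z is non-increasing with values in [0,1], z_0 = 1,
z_1 ≤ (1+λ)/2 and z_k ≤ 2 a_k for all k ≥ 1, then μ(z,k) ≤ ρ^k μ(a,k). -/
theorem stmt10 (lam : ℝ) (hlam0 : 0 < lam) (hlam1 : lam < 1) (n : ℕ) (hn : 1 ≤ n)
    (a : ℕ → ℝ) (ha0 : a 0 = 1)
    (harec : ∀ k, a (k + 1) = lam * a k ^ n * mu n a k)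
    (rho : ℝ)
    (hrho : rho = if n = 1 then 4 / (1 - lam) else 2 ^ n / (1 - Real.exp (-(1 / 2))))
    (z : ℕ → ℝ) (hz0 : z 0 = 1) (hmono : ∀ k, z (k + 1) ≤ z k)
    (hbd : ∀ k, 0 ≤ z k ∧ z k ≤ 1)
    (h1 : z 1 ≤ (1 + lam) / 2) (hza : ∀ k, 1 ≤ k → z k ≤ 2 * a k) :
    ∀ k : ℕ, mu n z k ≤ rho ^ k * mu n a k := by
  have hlam' : (0:ℝ) < 1 - lam := by linarith
  have hA := a_facts lam hlam0 hlam1 n hn a ha0 harec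
  have haPos : ∀ j, 0 < a j := fun j => ((hA j).1 j le_rfl).1
  have haLe1 : ∀ j, a j ≤ 1 := fun j => ((hA j).1 j le_rfl).2
  have haMono : ∀ j, a (j + 1) ≤ a j := fun j => (hA (j + 1)).2 j (Nat.lt_succ_self j)
  have hfa : ∀ j, 0 < muFactor n a j ∧ muFactor n a j ≤ a j ^ n ∧
      a (j + 1) ^ n ≤ muFactor n a j :=
    fun j => factor_bounds n hn a j (haPos (j + 1)) (haMono j) (haLe1 j)
  have hmua : ∀ k, 0 < mu n a k := fun k => Finset.prod_pos (fun j _ => (hfa j).1)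
  have hzanti : Antitone z := antitone_nat_of_succ_le hmono
  have hzpow : ∀ j, z (j + 1) ^ n ≤ 2 ^ n * a (j + 1) ^ n := by
    intro j
    have h := hza (j + 1) (Nat.succ_le_succ (Nat.zero_le j))
    calc z (j + 1) ^ n ≤ (2 * a (j + 1)) ^ n :=
          pow_le_pow_left₀ (hbd (j + 1)).1 h n
    _ = 2 ^ n * a (j + 1) ^ n := mul_pow 2 _ n
  -- generic induction once factor bounds are known
  have main : ∀ r : ℝ, 0 ≤ r →
      (∀ j, 0 ≤ muFactor n z j ∧ muFactor n z j ≤ r * muFactor n a j) →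
      ∀ k, mu n z k ≤ r ^ k * mu n a k := by
    intro r hr hfac k
    induction k with
    | zero => simp [mu]
    | succ k ih =>
      have e1 : mu n z (k + 1) = mu n z k * muFactor n z k := by
        simp [mu, Finset.prod_range_succ]
      have e2 : mu n a (k + 1) = mu n a k * muFactor n a k := by
        simp [mu, Finset.prod_range_succ]
      rw [e1, e2]
      have h := mul_le_mul ih (hfac k).2 (hfac k).1
        (mul_nonneg (pow_nonneg hr k) (hmua k).le)
      calc mu n z k * muFactor n z k ≤ (r ^ k * mu n a k) * (r * muFactor n a k) := h
      _ = r ^ (k + 1) * (mu n a k * muFactor n a k) := by ring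
  by_cases hcase : n = 1
  · -- n = 1
    subst hcase
    rw [if_pos rfl] at hrho
    subst hrho
    have hr0 : (0:ℝ) ≤ 4 / (1 - lam) := by positivity
    apply main _ hr0
    intro j
    rcases Nat.eq_zero_or_pos j with hj0 | hj1
    · subst hj0
      have ha1 : a 1 = lam := by
        have h := harec 0
        simp [mu, ha0] at h
        exact h
      have hz_eq : muFactor 1 z 0 = 1 := by
        have hpz : pcoef 1 z 0 = 1 - z 1 := by simp [pcoef, hz0]
        by_cases h : z 1 = 0
        · rw [muFactor, if_pos]
          exact ⟨by simp [h], by rw [hpz, h]; ring⟩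
        · rw [muFactor, if_neg, hpz]
          · have : (1:ℝ) - (1 - z 1) = z 1 := by ring
            rw [this, pow_one, div_self h]
          · rintro ⟨h', -⟩
            rw [pow_one] at h'
            exact h h'
      have ha_eq : muFactor 1 a 0 = 1 := by
        have hpa : pcoef 1 a 0 = 1 - a 1 := by simp [pcoef, ha0]
        rw [muFactor, if_neg, hpa]
        · have : (1:ℝ) - (1 - a 1) = a 1 := by ring
          rw [this, pow_one, div_self (by rw [ha1]; linarith)]
        · rintro ⟨h', -⟩
          rw [pow_one, ha1] at h'
          linarith
      rw [hz_eq, ha_eq, mul_one]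
      refine ⟨by norm_num, ?_⟩
      rw [le_div_iff₀ hlam']
      linarith
    · -- n = 1, j ≥ 1
      have hpz : pcoef 1 z j = z j - z (j + 1) := by simp [pcoef]
      have hzj1 : z j ≤ (1 + lam) / 2 := le_trans (hzanti hj1) h1
      have hd : (1 - lam) / 2 ≤ 1 - pcoef 1 z j := by
        rw [hpz]; linarith [(hbd (j + 1)).1]
      have hd0 : (0:ℝ) < 1 - pcoef 1 z j := by linarith
      have hne : ¬ (z (j + 1) ^ 1 = 0 ∧ 1 - pcoef 1 z j = 0) := by
        rintro ⟨-, h'⟩; linarith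
      constructor
      · rw [muFactor, if_neg hne]
        exact div_nonneg (pow_nonneg (hbd (j + 1)).1 1) hd0.le
      · have step : muFactor 1 z j ≤ (4 / (1 - lam)) * a (j + 1) := by
          rw [muFactor, if_neg hne, div_le_iff₀ hd0, pow_one]
          have hm1 : (4 / (1 - lam)) * a (j + 1) * ((1 - lam) / 2) ≤
              (4 / (1 - lam)) * a (j + 1) * (1 - pcoef 1 z j) := by
            exact mul_le_mul_of_nonneg_left hd (mul_nonneg hr0 (haPos (j + 1)).le)
          have hm2 : (4 / (1 - lam)) * a (j + 1) * ((1 - lam) / 2) = 2 * a (j + 1) := by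
            field_simp; ring
          have hz2 : z (j + 1) ≤ 2 * a (j + 1) := hza (j + 1) (by omega)
          linarith
        refine le_trans step ?_
        have := (hfa j).2.2
        rw [pow_one] at this
        exact mul_le_mul_of_nonneg_left this hr0
  · -- n ≥ 2
    have hn2 : 2 ≤ n := by omega
    rw [if_neg hcase] at hrho
    subst hrho
    have hE : Real.exp (-(1/2 : ℝ)) < 1 := by
      rw [← Real.exp_zero]
      exact Real.exp_lt_exp.mpr (by norm_num)
    have hE2 : (0:ℝ) < 1 - Real.exp (-(1/2)) := by linarith
    have hr0 : (0:ℝ) ≤ 2 ^ n / (1 - Real.exp (-(1/2))) :=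
      div_nonneg (by positivity) hE2.le
    apply main _ hr0
    intro j
    have hp : pcoef n z j ≤ Real.exp (-(1/2)) := by
      have hb := pbound n hn2 (z (j + 1)) (hbd (j + 1)).1 (hbd (j + 1)).2
      have hstep : (n:ℝ) * (z j - z (j + 1)) * z (j + 1) ^ (n - 1) ≤
          (n:ℝ) * (1 - z (j + 1)) * z (j + 1) ^ (n - 1) := by
        apply mul_le_mul_of_nonneg_right _ (pow_nonneg (hbd (j + 1)).1 _)
        apply mul_le_mul_of_nonneg_left _ (Nat.cast_nonneg n)
        linarith [(hbd j).2]
      unfold pcoef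
      linarith
    have hd0 : (0:ℝ) < 1 - pcoef n z j := by linarith
    have hne : ¬ (z (j + 1) ^ n = 0 ∧ 1 - pcoef n z j = 0) := by
      rintro ⟨-, h'⟩; linarith
    constructor
    · rw [muFactor, if_neg hne]
      exact div_nonneg (pow_nonneg (hbd (j + 1)).1 n) hd0.le
    · rw [muFactor, if_neg hne]
      have s1 : z (j + 1) ^ n / (1 - pcoef n z j) ≤
          (2 ^ n * a (j + 1) ^ n) / (1 - Real.exp (-(1/2))) := by
        apply div_le_div₀ (mul_nonneg (by positivity) (pow_nonneg (haPos (j+1)).le n))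
          (hzpow j) hE2 (by linarith)
      refine le_trans s1 ?_
      have s2 : (2 ^ n * a (j + 1) ^ n) / (1 - Real.exp (-(1/2))) =
          (2 ^ n / (1 - Real.exp (-(1/2)))) * a (j + 1) ^ n := by ring
      rw [s2]
      exact mul_le_mul_of_nonneg_left (hfa j).2.2 hr0

end
end

section
/- For every x ∈ D(d): (i) if x_1 = 1 then u_1(x) ≤ 0; (ii) if x_d = 0 then u_d(x) ≥ 0; (iii) for every 1 ≤ k ≤ d−1, if x_k = x_{k+1} then u_{k+1}(x) ≤ u_k(x). -/
open Filter

noncomputable section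

lemma aux_pow (a b : ℝ) (hb : 0 ≤ b) (hba : b ≤ a) :
    ∀ m : ℕ, ((m : ℝ) + 1) * b ^ m * (a - b) ≤ a ^ (m + 1) - b ^ (m + 1) := by
  intro m
  induction m with
  | zero => simp
  | succ m ih =>
    have ha : (0:ℝ) ≤ a := hb.trans hba
    rw [pow_succ a (m+1), pow_succ b (m+1), pow_succ b m] at *
    set y := b ^ m with hy
    set A := a ^ (m+1) with hA
    have hynn : (0:ℝ) ≤ y := pow_nonneg hb m
    have hnn : (0:ℝ) ≤ ((m:ℝ) + 1) * y * (a - b) :=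
      mul_nonneg (mul_nonneg (by positivity) hynn) (sub_nonneg.2 hba)
    have h1 := mul_le_mul_of_nonneg_left ih ha
    have h2 := mul_le_mul_of_nonneg_right hba hnn
    push_cast
    nlinarith [h1, h2]

lemma aux_pow' (a b : ℝ) (hb : 0 ≤ b) (hba : b ≤ a) (n : ℕ) (hn : 1 ≤ n) :
    (n : ℝ) * (a - b) * b ^ (n - 1) ≤ a ^ n - b ^ n := by
  obtain ⟨m, rfl⟩ : ∃ m, n = m + 1 := ⟨n - 1, (Nat.succ_pred_eq_of_pos hn).symm⟩
  have := aux_pow a b hb hba m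
  simp only [Nat.add_sub_cancel]
  push_cast
  nlinarith [this]

/-- boundary behaviour of the truncated vector field on D(d). -/
theorem stmt12 (lam : ℝ) (hlam0 : 0 < lam) (hlam1 : lam < 1) (n : ℕ) (hn : 1 ≤ n) (d : ℕ) (hd : 1 ≤ d)
    (x : ℕ → ℝ) (hx : memDd d x) :
    (x 1 = 1 → ufield lam n d x 1 ≤ 0) ∧
    (x d = 0 → 0 ≤ ufield lam n d x d) ∧
    (∀ k, 1 ≤ k → k ≤ d - 1 → x k = x (k + 1) →
      ufield lam n d x (k + 1) ≤ ufield lam n d x k) := by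
  obtain ⟨hx0, hmono, hbd, hzero⟩ := hx
  have hnn : ∀ k, 0 ≤ x k := fun k => (hbd k).1
  have hle1 : ∀ k, x k ≤ 1 := fun k => (hbd k).2
  have hpow_nn : ∀ j, (0:ℝ) ≤ x j ^ n := fun j => pow_nonneg (hnn j) n
  have hpow_le1 : ∀ j, x j ^ n ≤ 1 := fun j => pow_le_one₀ (hnn j) (hle1 j)
  have hp : ∀ j, pcoef n x j + x (j+1) ^ n ≤ x j ^ n := by
    intro j
    have := aux_pow' (x j) (x (j+1)) (hnn _) (hmono j) n hn
    unfold pcoef; linarith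
  have hp2 : ∀ j, x (j+1) ^ n ≤ 1 - pcoef n x j := by
    intro j; have h1 := hp j; have h2 := hpow_le1 j; linarith
  have hdpos : ∀ j, ¬(x (j+1) ^ n = 0 ∧ 1 - pcoef n x j = 0) → 0 < 1 - pcoef n x j := by
    intro j h
    rcases ((hpow_nn (j+1)).trans (hp2 j)).lt_or_eq with h' | h'
    · exact h'
    · exact absurd ⟨le_antisymm (h' ▸ hp2 j) (hpow_nn (j+1)), h'.symm⟩ h
  have hFnn : ∀ j, 0 ≤ muFactor n x j := by
    intro j
    unfold muFactor
    split
    · exact zero_le_one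
    · next h => exact div_nonneg (hpow_nn _) (hdpos j h).le
  have hmu_nn : ∀ k, 0 ≤ mu n x k := fun k => Finset.prod_nonneg fun j _ => hFnn j
  have hmu0 : mu n x 0 = 1 := by simp [mu]
  have hkey : ∀ m, x (m+1) ^ n * mu n x (m+1) * (2 - x (m+1) ^ n) ≤ x m ^ n * mu n x m := by
    intro m
    have hrec : mu n x (m+1) = mu n x m * muFactor n x m := by
      unfold mu; exact Finset.prod_range_succ _ m
    have hcl : x (m+1) ^ n * muFactor n x m * (2 - x (m+1) ^ n) ≤ x m ^ n := by
      have hBA : x (m+1) ^ n ≤ x m ^ n := pow_le_pow_left₀ (hnn _) (hmono m) n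
      have hA1 := hpow_le1 m
      have hB0 := hpow_nn (m+1)
      have hpB := hp m
      unfold muFactor
      split
      · next h => rw [h.1]; nlinarith [hpow_nn m]
      · next h =>
        have hdp := hdpos m h
        rw [show x (m+1) ^ n * (x (m+1) ^ n / (1 - pcoef n x m)) * (2 - x (m+1) ^ n)
            = (x (m+1) ^ n * x (m+1) ^ n * (2 - x (m+1) ^ n)) / (1 - pcoef n x m) by ring,
          div_le_iff₀ hdp]
        nlinarith [mul_nonneg (hpow_nn m) (by linarith : 0 ≤ x m ^ n - x (m+1) ^ n - pcoef n x m),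
          mul_nonneg (sub_nonneg.2 hBA) (sub_nonneg.2 hA1),
          mul_nonneg hB0 (sq_nonneg (1 - x (m+1) ^ n))]
    calc x (m+1) ^ n * mu n x (m+1) * (2 - x (m+1) ^ n)
        = mu n x m * (x (m+1) ^ n * muFactor n x m * (2 - x (m+1) ^ n)) := by rw [hrec]; ring
      _ ≤ mu n x m * (x m ^ n) := mul_le_mul_of_nonneg_left hcl (hmu_nn m)
      _ = x m ^ n * mu n x m := by ring
  refine ⟨?_, ?_, ?_⟩
  · -- part (i)
    intro h1
    have hmf0 : muFactor n x 0 = 1 := by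
      unfold muFactor pcoef
      norm_num [hx0, h1]
    have hmu1 : mu n x 1 = 1 := by
      unfold mu; rw [Finset.prod_range_one, hmf0]
    unfold ufield
    split
    · unfold vfield
      norm_num
      rw [hx0, h1, hmu0, hmu1]
      simp only [one_pow, mul_one]
      linarith [hle1 2]
    · split
      · next h h' =>
        have : d = 1 := h'.symm
        subst this
        norm_num
        rw [hx0, h1, hmu0, hmu1]
        simp only [one_pow, mul_one]
        linarith
      · next h h' => omega
  · -- part (ii)
    intro hxd
    have hu : ufield lam n d x d = lam * x (d-1) ^ n * mu n x (d-1) := by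
      unfold ufield
      rw [if_neg (lt_irrefl d), if_pos rfl, hxd, zero_pow (by omega : n ≠ 0)]
      ring
    rw [hu]
    exact mul_nonneg (mul_nonneg hlam0.le (hpow_nn _)) (hmu_nn _)
  · -- part (iii)
    intro k hk1 hkd hEq
    have hkd' : k < d := by omega
    obtain ⟨m, rfl⟩ : ∃ m, k = m + 1 := ⟨k - 1, by omega⟩
    have hEq' : x (m+1+1) = x (m+1) := hEq.symm
    have hpc : pcoef n x (m+1) = 0 := by
      unfold pcoef; rw [hEq']; ring
    have hmf : muFactor n x (m+1) = x (m+1+1) ^ n := by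
      unfold muFactor
      rw [hpc]
      norm_num
    have hrec : mu n x (m+2) = mu n x (m+1) * x (m+1+1) ^ n := by
      have : mu n x (m+2) = mu n x (m+1) * muFactor n x (m+1) := by
        unfold mu; exact Finset.prod_range_succ _ (m+1)
      rw [this, hmf]
    have hu1 : ufield lam n d x (m+1) = vfield lam n x (m+1) := by
      unfold ufield; rw [if_pos hkd']
    have hu2 : ufield lam n d x (m+1+1) = vfield lam n x (m+1+1) := by
      unfold ufield
      by_cases h2 : m + 1 + 1 < d
      · rw [if_pos h2]
      · have hd2 : m + 1 + 1 = d := by omega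
        subst hd2
        rw [if_neg h2, if_pos rfl]
        have hz : x (m+1+1+1) = 0 := hzero _ (by omega)
        unfold vfield
        rw [hz]
        ring
    rw [hu1, hu2]
    have H : lam * x (m+1) ^ n * mu n x (m+1) - lam * x (m+1+1) ^ n * mu n x (m+2)
        - (x (m+1+1) - x (m+1+1+1))
        ≤ lam * x m ^ n * mu n x m - lam * x (m+1) ^ n * mu n x (m+1)
          - (x (m+1) - x (m+1+1)) := by
      rw [hrec, hEq']
      have hk := hkey m
      have h3 : x (m+1+1+1) ≤ x (m+1) := by
        have := hmono (m+1+1)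
        linarith [hEq']
      nlinarith [mul_le_mul_of_nonneg_left hk hlam0.le]
    exact H

end
end

section
/- The truncated vector field is quasimonotone: if x, y ∈ D(d) satisfy x_j ≤ y_j for all 1 ≤ j ≤ d and x_k = y_k for some 1 ≤ k ≤ d, then u_k(x) ≤ u_k(y). -/
open Filter

noncomputable section

noncomputable section

/-- Abstract form of the μ-factor. -/
def fA (n : ℕ) (a b : ℝ) : ℝ :=
  if b ^ n = 0 ∧ 1 - (n : ℝ) * (a - b) * b ^ (n - 1) = 0 then 1
  else b ^ n / (1 - (n : ℝ) * (a - b) * b ^ (n - 1))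

lemma key1 (n : ℕ) (hn : 1 ≤ n) {c s t : ℝ} (hc : 0 ≤ c) (hcs : c ≤ s) (hst : s ≤ t) :
    (n : ℝ) * c ^ (n - 1) * (t - s) ≤ t ^ n - s ^ n := by
  rw [← geom_sum₂_mul]
  refine mul_le_mul_of_nonneg_right ?_ (by linarith)
  have h1 : (n : ℝ) * c ^ (n - 1) = ∑ _i ∈ Finset.range n, c ^ (n - 1) := by
    simp [Finset.sum_const, mul_comm]
  rw [h1]
  refine Finset.sum_le_sum fun i hi => ?_
  have hin : i ≤ n - 1 := Nat.le_pred_of_lt (Finset.mem_range.mp hi)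
  have h2 : c ^ (n - 1) = c ^ i * c ^ (n - 1 - i) := by
    rw [← pow_add]; congr 1; omega
  rw [h2]
  have hct : c ≤ t := le_trans hcs hst
  exact mul_le_mul (pow_le_pow_left₀ hc hct i) (pow_le_pow_left₀ hc hcs _)
    (pow_nonneg hc _) (pow_nonneg (le_trans hc hct) i)

lemma key2 (n : ℕ) (hn : 1 ≤ n) {s t : ℝ} (hs : 0 ≤ s) (hst : s ≤ t) (ht : t ≤ 1) :
    (n : ℝ) * (s ^ (n - 1) * t ^ (n - 1)) * (t - s) ≤ t ^ n - s ^ n := by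
  rw [← geom_sum₂_mul]
  refine mul_le_mul_of_nonneg_right ?_ (by linarith)
  have h1 : (n : ℝ) * (s ^ (n - 1) * t ^ (n - 1)) = ∑ _i ∈ Finset.range n, s ^ (n - 1) * t ^ (n - 1) := by
    simp [Finset.sum_const, mul_comm]
  rw [h1]
  refine Finset.sum_le_sum fun i hi => ?_
  have ht0 : 0 ≤ t := le_trans hs hst
  have hin : i ≤ n - 1 := Nat.le_pred_of_lt (Finset.mem_range.mp hi)
  calc s ^ (n - 1) * t ^ (n - 1) ≤ s ^ (n - 1 - i) * t ^ i :=
        mul_le_mul (pow_le_pow_of_le_one hs (le_trans hst ht) (by omega))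
          (pow_le_pow_of_le_one ht0 ht hin) (pow_nonneg ht0 _) (pow_nonneg hs _)
    _ = t ^ i * s ^ (n - 1 - i) := mul_comm _ _

/-- denominator lower bound -/
lemma key3 (n : ℕ) (hn : 1 ≤ n) {a b : ℝ} (hb : 0 ≤ b) (hba : b ≤ a) (ha : a ≤ 1) :
    b ^ n ≤ 1 - (n : ℝ) * (a - b) * b ^ (n - 1) := by
  have h1 := key1 n hn hb le_rfl hba
  have h2 : a ^ n ≤ 1 := pow_le_one₀ (le_trans hb hba) ha
  nlinarith

lemma fA_nonneg (n : ℕ) (hn : 1 ≤ n) {a b : ℝ} (hb : 0 ≤ b) (hba : b ≤ a) (ha : a ≤ 1) :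
    0 ≤ fA n a b := by
  unfold fA
  split
  · norm_num
  · exact div_nonneg (pow_nonneg hb n) (by nlinarith [key3 n hn hb hba ha, pow_nonneg hb n])

lemma fA_le_one (n : ℕ) (hn : 1 ≤ n) {a b : ℝ} (hb : 0 ≤ b) (hba : b ≤ a) (ha : a ≤ 1) :
    fA n a b ≤ 1 := by
  unfold fA
  split
  · norm_num
  · rename_i h
    have hk := key3 n hn hb hba ha
    have hbn : 0 ≤ b ^ n := pow_nonneg hb n
    rcases eq_or_lt_of_le (le_trans hbn hk) with h0 | h0
    · exact absurd ⟨by linarith, h0.symm⟩ h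
    · exact div_le_one_of_le₀ hk (le_of_lt h0)

lemma fA_mono_left (n : ℕ) (hn : 1 ≤ n) {b s t : ℝ} (hb : 0 ≤ b) (hbs : b ≤ s)
    (hst : s ≤ t) (ht : t ≤ 1) :
    fA n s b ≤ fA n t b := by
  have hEs := key3 n hn hb hbs (le_trans hst ht)
  have hEt := key3 n hn hb (le_trans hbs hst) ht
  have hbn : 0 ≤ b ^ n := pow_nonneg hb n
  have hb1 : 0 ≤ b ^ (n - 1) := pow_nonneg hb _
  have hts : 1 - (n : ℝ) * (t - b) * b ^ (n - 1) ≤ 1 - (n : ℝ) * (s - b) * b ^ (n - 1) := by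
    have h0 : (0:ℝ) ≤ n := Nat.cast_nonneg n
    have h1 : (n:ℝ) * (t - b) * b ^ (n - 1) - (n:ℝ) * (s - b) * b ^ (n - 1)
        = (n:ℝ) * b ^ (n - 1) * (t - s) := by ring
    nlinarith [mul_nonneg (mul_nonneg h0 hb1) (sub_nonneg.2 hst)]
  rcases eq_or_lt_of_le hbn with hb0 | hb0
  · -- b ^ n = 0
    unfold fA
    rcases eq_or_lt_of_le (le_trans hbn hEs) with hEs0 | hEs0
    · have hEt0 : 1 - (n : ℝ) * (t - b) * b ^ (n - 1) = 0 := le_antisymm (by linarith) (by linarith)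
      rw [if_pos ⟨hb0.symm, hEs0.symm⟩, if_pos ⟨hb0.symm, hEt0⟩]
    · rw [if_neg (by rintro ⟨-, h⟩; linarith)]
      have hbn0 : b ^ n = 0 := hb0.symm
      rw [hbn0, zero_div]
      split
      · norm_num
      · have hEt0 : 0 ≤ 1 - (n : ℝ) * (t - b) * b ^ (n - 1) := by rw [← hbn0]; exact hEt
        simp
  · -- 0 < b ^ n
    have hEs0 : 0 < 1 - (n : ℝ) * (s - b) * b ^ (n - 1) := lt_of_lt_of_le hb0 hEs
    have hEt0 : 0 < 1 - (n : ℝ) * (t - b) * b ^ (n - 1) := lt_of_lt_of_le hb0 hEt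
    unfold fA
    rw [if_neg (by rintro ⟨h, -⟩; linarith), if_neg (by rintro ⟨h, -⟩; linarith)]
    exact div_le_div_of_nonneg_left hbn hEt0 hts

end

noncomputable section

lemma fA_mono_right (n : ℕ) (hn : 1 ≤ n) {a s t : ℝ} (hs : 0 ≤ s) (hst : s ≤ t)
    (hta : t ≤ a) (ha : a ≤ 1) :
    fA n a s ≤ fA n a t := by
  rcases eq_or_lt_of_le hs with hs0 | hs0
  · -- s = 0
    have hsn : s ^ n = 0 := by rw [← hs0]; exact zero_pow (by omega)
    by_cases hDs : 1 - (n : ℝ) * (a - s) * s ^ (n - 1) = 0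
    · -- degenerate case: forces n = 1, a = 1
      have hn1 : n = 1 := by
        by_contra hne
        have h2 : 2 ≤ n := by omega
        have : s ^ (n - 1) = 0 := by rw [← hs0]; exact zero_pow (by omega)
        rw [this] at hDs; norm_num at hDs
      subst hn1
      have ha1 : a = 1 := by
        rw [← hs0] at hDs; push_cast at hDs; nlinarith [hDs]
      subst ha1
      rw [fA, if_pos ⟨hsn, hDs⟩]
      rcases eq_or_lt_of_le (le_trans hs hst) with ht0 | ht0
      · rw [fA, if_pos]
        constructor
        · rw [← ht0]; norm_num
        · rw [← ht0]; norm_num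
      · rw [fA, if_neg]
        · have e : (1:ℝ) - (1:ℕ) * (1 - t) * t ^ (1 - 1) = t := by push_cast; ring
          rw [e, pow_one, div_self (ne_of_gt ht0)]
        · rintro ⟨h1, -⟩
          rw [pow_one] at h1; linarith
    · rw [fA, if_neg (by rintro ⟨-, h⟩; exact hDs h), hsn, zero_div]
      exact fA_nonneg n hn (le_trans hs hst) hta ha
  · -- 0 < s
    have ht0 : 0 < t := lt_of_lt_of_le hs0 hst
    have hsn : 0 < s ^ n := pow_pos hs0 n
    have htn : 0 < t ^ n := pow_pos ht0 n
    have hDs : s ^ n ≤ 1 - (n : ℝ) * (a - s) * s ^ (n - 1) :=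
      key3 n hn hs (le_trans hst hta) ha
    have hDt : t ^ n ≤ 1 - (n : ℝ) * (a - t) * t ^ (n - 1) :=
      key3 n hn (le_of_lt ht0) hta ha
    have hDs0 : 0 < 1 - (n : ℝ) * (a - s) * s ^ (n - 1) := lt_of_lt_of_le hsn hDs
    have hDt0 : 0 < 1 - (n : ℝ) * (a - t) * t ^ (n - 1) := lt_of_lt_of_le htn hDt
    rw [fA, if_neg (by rintro ⟨h, -⟩; linarith), fA, if_neg (by rintro ⟨h, -⟩; linarith)]
    rw [div_le_div_iff₀ hDs0 hDt0]
    -- s^n * Dt ≤ t^n * Ds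
    have key := key2 n hn (le_of_lt hs0) hst (le_trans hta ha)
    have e1 : s ^ (n - 1) * s = s ^ n := by
      rw [← pow_succ]; congr 1; omega
    have e2 : t ^ (n - 1) * t = t ^ n := by
      rw [← pow_succ]; congr 1; omega
    have hnn : (0:ℝ) ≤ (n:ℝ) := Nat.cast_nonneg n
    have hsm : (0:ℝ) ≤ s ^ (n-1) := pow_nonneg (le_of_lt hs0) _
    have htm : (0:ℝ) ≤ t ^ (n-1) := pow_nonneg (le_of_lt ht0) _
    have key' : (n:ℝ) * a * (s ^ (n-1) * t ^ (n-1)) * (t - s) ≤ t ^ n - s ^ n := by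
      rcases le_or_gt a 0 with ha0 | ha0
      · have h1 : (n:ℝ) * a * (s ^ (n-1) * t ^ (n-1)) * (t - s) ≤ 0 := by
          apply mul_nonpos_of_nonpos_of_nonneg
          · nlinarith
          · linarith
        nlinarith [pow_le_pow_left₀ (le_of_lt hs0) hst n]
      · calc (n:ℝ) * a * (s ^ (n-1) * t ^ (n-1)) * (t - s)
            ≤ (n:ℝ) * 1 * (s ^ (n-1) * t ^ (n-1)) * (t - s) := by
              apply mul_le_mul_of_nonneg_right _ (by linarith)
              apply mul_le_mul_of_nonneg_right _ (by positivity)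
              nlinarith
        _ = (n:ℝ) * (s ^ (n-1) * t ^ (n-1)) * (t - s) := by ring
        _ ≤ t ^ n - s ^ n := key
    -- expand: t^n * Ds - s^n * Dt = (t^n - s^n) - n*a*s^(n-1)*t^(n-1)*(t-s)
    nlinarith [key', e1, e2]

lemma fA_mono (n : ℕ) (hn : 1 ≤ n) {a b a' b' : ℝ} (hb : 0 ≤ b) (hba : b ≤ a)
    (hbb' : b ≤ b') (hb'a' : b' ≤ a') (haa' : a ≤ a') (ha' : a' ≤ 1) :
    fA n a b ≤ fA n a' b' :=
  le_trans (fA_mono_left n hn hb hba haa' ha') (fA_mono_right n hn hb hbb' hb'a' ha')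

/-- `cval n a b = a^n - b^n * fA n a b`. -/
def cval (n : ℕ) (a b : ℝ) : ℝ := a ^ n - b ^ n * fA n a b

lemma cval_nonneg (n : ℕ) (hn : 1 ≤ n) {a b : ℝ} (hb : 0 ≤ b) (hba : b ≤ a) (ha : a ≤ 1) :
    0 ≤ cval n a b := by
  have h1 : b ^ n * fA n a b ≤ a ^ n * 1 :=
    mul_le_mul (pow_le_pow_left₀ hb hba n) (fA_le_one n hn hb hba ha)
      (fA_nonneg n hn hb hba ha) (pow_nonneg (le_trans hb hba) n)
  unfold cval; nlinarith

lemma cval_mono (n : ℕ) (hn : 1 ≤ n) {c s t : ℝ} (hc : 0 ≤ c) (hcs : c ≤ s)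
    (hst : s ≤ t) (ht : t ≤ 1) :
    cval n s c ≤ cval n t c := by
  rcases eq_or_lt_of_le hc with hc0 | hc0
  · have hcn : c ^ n = 0 := by rw [← hc0]; exact zero_pow (by omega)
    unfold cval
    rw [hcn]
    have := pow_le_pow_left₀ (le_trans hc hcs) hst n
    linarith
  · have hcn : 0 < c ^ n := pow_pos hc0 n
    have hDs : c ^ n ≤ 1 - (n : ℝ) * (s - c) * c ^ (n - 1) :=
      key3 n hn hc hcs (le_trans hst ht)
    have hDt : c ^ n ≤ 1 - (n : ℝ) * (t - c) * c ^ (n - 1) :=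
      key3 n hn hc (le_trans hcs hst) ht
    have hDs0 : 0 < 1 - (n : ℝ) * (s - c) * c ^ (n - 1) := lt_of_lt_of_le hcn hDs
    have hDt0 : 0 < 1 - (n : ℝ) * (t - c) * c ^ (n - 1) := lt_of_lt_of_le hcn hDt
    unfold cval fA
    rw [if_neg (by rintro ⟨h, -⟩; linarith), if_neg (by rintro ⟨h, -⟩; linarith)]
    set Ds := 1 - (n : ℝ) * (s - c) * c ^ (n - 1) with hDsdef
    set Dt := 1 - (n : ℝ) * (t - c) * c ^ (n - 1) with hDtdef
    have key := key1 n hn hc hcs hst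
    have hA : 0 ≤ (n:ℝ) * c ^ (n-1) * (t - s) :=
      mul_nonneg (mul_nonneg (Nat.cast_nonneg n) (pow_nonneg hc _)) (sub_nonneg.2 hst)
    have hDD : c ^ n * c ^ n ≤ Dt * Ds :=
      mul_le_mul hDt hDs (le_of_lt hcn) (by linarith)
    have hDtDs : 0 < Dt * Ds := mul_pos hDt0 hDs0
    have e : c ^ n * (c ^ n / Dt) - c ^ n * (c ^ n / Ds)
        = c ^ n * c ^ n * ((n:ℝ) * c ^ (n-1) * (t - s)) / (Dt * Ds) := by
      field_simp
      rw [hDsdef, hDtdef]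
      ring
    have hfrac : c ^ n * c ^ n * ((n:ℝ) * c ^ (n-1) * (t - s)) / (Dt * Ds)
        ≤ (n:ℝ) * c ^ (n-1) * (t - s) := by
      rw [div_le_iff₀ hDtDs]
      nlinarith [mul_le_mul_of_nonneg_left hDD hA]
    linarith [e, hfrac, key]

end

lemma muFactor_eq_fA (n : ℕ) (z : ℕ → ℝ) (j : ℕ) :
    muFactor n z j = fA n (z j) (z (j + 1)) := rfl

lemma S_eq (n : ℕ) (z : ℕ → ℝ) (m : ℕ) :
    z m ^ n * mu n z m - z (m + 1) ^ n * mu n z (m + 1)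
      = mu n z m * cval n (z m) (z (m + 1)) := by
  have h : mu n z (m + 1) = mu n z m * muFactor n z m := Finset.prod_range_succ _ _
  rw [h, muFactor_eq_fA, cval]
  ring

lemma main_ineq (n : ℕ) (hn : 1 ≤ n) (d : ℕ) (x y : ℕ → ℝ) (hx : memDd d x) (hy : memDd d y)
    (hle : ∀ j, 1 ≤ j → j ≤ d → x j ≤ y j)
    (k : ℕ) (hk1 : 1 ≤ k) (hkd : k ≤ d) (heq : x k = y k) :
    x (k - 1) ^ n * mu n x (k - 1) - x k ^ n * mu n x k
      ≤ y (k - 1) ^ n * mu n y (k - 1) - y k ^ n * mu n y k := by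
  obtain ⟨m, rfl⟩ : ∃ m, k = m + 1 := ⟨k - 1, by omega⟩
  obtain ⟨hx0, hxm, hxb, -⟩ := hx
  obtain ⟨hy0, hym, hyb, -⟩ := hy
  have hxle : ∀ i, i ≤ d → x i ≤ y i := by
    intro i hi
    rcases Nat.eq_zero_or_pos i with rfl | hi1
    · rw [hx0, hy0]
    · exact hle i hi1 hi
  simp only [Nat.add_sub_cancel]
  rw [S_eq, S_eq]
  have hprod : mu n x m ≤ mu n y m := by
    unfold mu
    refine Finset.prod_le_prod (fun i _ => ?_) (fun i hi => ?_)
    · rw [muFactor_eq_fA]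
      exact fA_nonneg n hn (hxb _).1 (hxm i) (hxb i).2
    · have him : i < m := Finset.mem_range.mp hi
      rw [muFactor_eq_fA, muFactor_eq_fA]
      exact fA_mono n hn (hxb _).1 (hxm i) (hxle (i + 1) (by omega)) (hym i)
        (hxle i (by omega)) (hyb i).2
  have hmy : 0 ≤ mu n y m := by
    unfold mu
    exact Finset.prod_nonneg fun i _ => by
      rw [muFactor_eq_fA]; exact fA_nonneg n hn (hyb _).1 (hym i) (hyb i).2
  have hcx : 0 ≤ cval n (x m) (x (m + 1)) :=
    cval_nonneg n hn (hxb _).1 (hxm m) (hxb m).2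
  have hcval : cval n (x m) (x (m + 1)) ≤ cval n (y m) (y (m + 1)) := by
    have h := cval_mono n hn (hxb (m + 1)).1 (hxm m) (hxle m (by omega)) (hyb m).2
    nth_rewrite 2 [heq] at h
    exact h
  exact mul_le_mul hprod hcval hcx hmy

/-- the truncated vector field is quasimonotone on D(d). -/
theorem stmt13 (lam : ℝ) (hlam0 : 0 < lam) (hlam1 : lam < 1) (n : ℕ) (hn : 1 ≤ n) (d : ℕ) (hd : 1 ≤ d)
    (x y : ℕ → ℝ) (hx : memDd d x) (hy : memDd d y)
    (hle : ∀ j, 1 ≤ j → j ≤ d → x j ≤ y j)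
    (k : ℕ) (hk1 : 1 ≤ k) (hkd : k ≤ d) (heq : x k = y k) :
    ufield lam n d x k ≤ ufield lam n d y k := by
  have hmain := main_ineq n hn d x y hx hy hle k hk1 hkd heq
  have h2 : lam * (x (k - 1) ^ n * mu n x (k - 1) - x k ^ n * mu n x k)
      ≤ lam * (y (k - 1) ^ n * mu n y (k - 1) - y k ^ n * mu n y k) :=
    mul_le_mul_of_nonneg_left hmain (le_of_lt hlam0)
  have ex : lam * (x (k - 1) ^ n * mu n x (k - 1) - x k ^ n * mu n x k)
      = lam * x (k - 1) ^ n * mu n x (k - 1) - lam * x k ^ n * mu n x k := by ring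
  have ey : lam * (y (k - 1) ^ n * mu n y (k - 1) - y k ^ n * mu n y k)
      = lam * y (k - 1) ^ n * mu n y (k - 1) - lam * y k ^ n * mu n y k := by ring
  rcases lt_or_eq_of_le hkd with hlt | rfl
  · rw [ufield, if_pos hlt, ufield, if_pos hlt]
    have htail : x (k + 1) ≤ y (k + 1) := hle (k + 1) (by omega) (by omega)
    unfold vfield
    linarith
  · rw [ufield, if_neg (lt_irrefl k), if_pos rfl, ufield, if_neg (lt_irrefl k), if_pos rfl]
    linarith

end
end
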